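/- arXiv:2503.21466 — 10 statements merged into one kernel-verified Lean document; each statement's English description precedes it below -/
import Mathlib

section
/- Let a, b, u, v be nonnegative integers with 0 < u < a and 0 < v < b, and suppose u·b + v·a ≥ a·b (i.e. x^u y^v lies in the integral closure of (x^a, y^b)). Then x^{a·u} y^{b·(a−u)} divides (x^u y^v)^a, and hence (x^u y^v)^a ∈ (x^a, y^b)^a. -/
/-- If `0 < u < a`, `0 < v < b` and `u·b + v·a ≥ a·b` (i.e. `x^u y^v`
lies in the integral closure of `(x^a, y^b)`), then `x^{a·u} y^{b·(a−u)}` divides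
`(x^u y^v)^a` (componentwise inequality of exponent vectors), and hence
`(x^u y^v)^a ∈ (x^a, y^b)^a` (some `x^{a k} y^{b (a−k)}` divides it). -/
theorem pow_mem_of_integral_closure (a b u v : ℕ)
    (hu : 0 < u) (hua : u < a) (hv : 0 < v) (hvb : v < b)
    (h : a * b ≤ u * b + v * a) :
    (a * u ≤ a * u ∧ b * (a - u) ≤ a * v) ∧
      ∃ k : ℕ, k ≤ a ∧ a * k ≤ a * u ∧ b * (a - k) ≤ a * v := by
  have key : b * (a - u) ≤ a * v := by
    have e : b * (a - u) + b * u = b * a := by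
      rw [← Nat.mul_add]; congr 1; omega
    have c1 : u * b = b * u := Nat.mul_comm _ _
    have c2 : v * a = a * v := Nat.mul_comm _ _
    have c3 : a * b = b * a := Nat.mul_comm _ _
    omega
  exact ⟨⟨le_rfl, key⟩, u, hua.le, le_rfl, key⟩
end

section
/- For the ideal I = (x^6, x^5 y, y^5) in k[x,y], the monomial f = x^5 y lies in the integral closure of (x^6, y^5), yet f^n ∉ (x^6, y^5)^n for all n with 1 ≤ n ≤ 4, while f^5 ∈ (x^6, y^5)^5. -/
/-- For `f = x^5 y`, the monomial `f` lies in the integral closure of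
`(x^6, y^5)` (there is `n ≥ 1` with `f^n ∈ (x^6, y^5)^n`), yet `f^n ∉ (x^6, y^5)^n`
for all `1 ≤ n ≤ 4`, while `f^5 ∈ (x^6, y^5)^5`. Membership `f^n ∈ (x^6,y^5)^n`
means: there are `i + j = n` with `6 i ≤ 5 n` and `5 j ≤ n`. -/
theorem example_bound_ic_one :
    (∃ n : ℕ, 0 < n ∧ ∃ i j : ℕ, i + j = n ∧ 6 * i ≤ 5 * n ∧ 5 * j ≤ n) ∧
    (∀ n : ℕ, 1 ≤ n → n ≤ 4 → ¬ ∃ i j : ℕ, i + j = n ∧ 6 * i ≤ 5 * n ∧ 5 * j ≤ n) ∧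
    (∃ i j : ℕ, i + j = 5 ∧ 6 * i ≤ 5 * 5 ∧ 5 * j ≤ 5) := by
  refine ⟨⟨5, by norm_num, 4, 1, by norm_num⟩, ?_, 4, 1, by norm_num⟩
  intro n h1 h4 ⟨i, j, hij, h6, h5⟩
  interval_cases n <;> omega
end

section
/- Let g, h, f be monomials in k[x,y] with f lying between g and h. Define the weighted degree wdeg_{g,h}(x^u y^v) = u·dist_y(g,h) + v·dist_x(g,h), and wdd(g,h) = wdeg_{g,h}(g) (which equals wdeg_{g,h}(h)). Then f belongs to the integral closure of (g,h) if and only if wdeg_{g,h}(f) ≥ wdd(g,h). -/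
/-- Monomials as exponent vectors in `ℕ × ℕ`. Let `g, h` form a
staircase (`g.1 < h.1`, `h.2 < g.2`) and let `f` lie between them (its degrees
exceed the minima `g.1` resp. `h.2`, and neither `g` nor `h` divides `f`). With
`wdeg_{g,h}(u,v) = u·dist_y(g,h) + v·dist_x(g,h)` and `wdd(g,h) = wdeg_{g,h}(g)`,
the monomial `f` belongs to the integral closure of `(g,h)` (some power `f^n`
lies in `(g,h)^n`) iff `wdeg_{g,h}(f) ≥ wdd(g,h)`. -/
theorem ic_iff_wdeg (g h f : ℕ × ℕ)
    (hx : g.1 < h.1) (hy : h.2 < g.2)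
    (hb1 : g.1 < f.1) (hb2 : h.2 < f.2)
    (hb3 : ¬ g ≤ f) (hb4 : ¬ h ≤ f) :
    (∃ n : ℕ, 0 < n ∧ ∃ k : ℕ, k ≤ n ∧ k • g + (n - k) • h ≤ n • f) ↔
      g.1 * (g.2 - h.2) + g.2 * (h.1 - g.1) ≤
        f.1 * (g.2 - h.2) + f.2 * (h.1 - g.1) := by
  obtain ⟨a, b⟩ := g
  obtain ⟨c, d⟩ := h
  obtain ⟨u, v⟩ := f
  simp only [Prod.mk_le_mk, Prod.smul_mk, Prod.mk_add_mk, smul_eq_mul,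
    not_and_or, not_le] at *
  -- derive v < b and u < c
  have hvb : v < b := by rcases hb3 with h' | h' <;> omega
  have huc : u < c := by rcases hb4 with h' | h' <;> omega
  constructor
  · rintro ⟨n, hn, k, hk, h1, h2⟩
    zify [hk, hx.le, hy.le] at h1 h2 ⊢
    have e1 : (0:ℤ) ≤ (b:ℤ) - d := by omega
    have e2 : (0:ℤ) ≤ (c:ℤ) - a := by omega
    have key : (n:ℤ) * (a*(b-d)+b*(c-a)) ≤ n * (u*(b-d)+v*(c-a)) := by
      nlinarith [mul_le_mul_of_nonneg_right h1 e1,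
                 mul_le_mul_of_nonneg_right h2 e2]
    have hn' : (0:ℤ) < n := by exact_mod_cast hn
    nlinarith [le_of_mul_le_mul_left (by linarith [key] : (n:ℤ) * (a*(b-d)+b*(c-a)) ≤ n * (u*(b-d)+v*(c-a))) hn']
  · intro hw
    refine ⟨(c-a)*(b-d), ?_, (c-u)*(b-d), ?_, ?_, ?_⟩
    · have : 0 < c - a := by omega
      have : 0 < b - d := by omega
      positivity
    · exact Nat.mul_le_mul_right _ (by omega)
    · have hsub : (c-a)*(b-d) - (c-u)*(b-d) = (u-a)*(b-d) := by
        rw [← Nat.sub_mul]; congr 1; omega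
      rw [hsub]
      zify [hx.le, hy.le, hb1.le, huc.le]
      nlinarith []
    · have hsub : (c-a)*(b-d) - (c-u)*(b-d) = (u-a)*(b-d) := by
        rw [← Nat.sub_mul]; congr 1; omega
      rw [hsub]
      zify [hx.le, hy.le] at hw
      zify [hx.le, hy.le, hb1.le, huc.le, hb2.le]
      nlinarith [hw]
end

section
/- Let u, v be positive integers, J an anchored monomial ideal in k[x,y] (i.e. gcd of all monomials of J is 1), r ≥ ⌈dist_y(J)/v⌉ an integer, and n ≥ r. For r ≤ j ≤ n, every monomial F ∈ (x^u, y^v)^n · J with deg_y F ≥ j·v lies in y^{v(j−r)} · (x^u, y^v)^{n−(j−r)} · J, and every monomial F ∈ (x^u, y^v)^n · J with deg_y F < j·v lies in x^{u(n−j)} · (x^u, y^v)^j · J. -/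
/-- A monomial `m` belongs to `(x^u, y^v)^n · J`, where `J` is the monomial ideal
generated by the finite set `G` of exponent vectors: some `x^{u(n-i)} y^{v i} · f`
with `0 ≤ i ≤ n`, `f ∈ G`, divides `m`. -/
def memPowJ (G : Finset (ℕ × ℕ)) (u v n : ℕ) (m : ℕ × ℕ) : Prop :=
  ∃ i, i ≤ n ∧ ∃ f ∈ G, u * (n - i) + f.1 ≤ m.1 ∧ v * i + f.2 ≤ m.2

/-- Lemma y-sections: Let `u, v > 0`, let `G` be the minimal
generating set (an antichain) of an anchored monomial ideal `J`, let
`r ≥ ⌈dist_y(J)/v⌉` (i.e. every generator has y-degree `≤ r·v`) and `n ≥ r`.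
Then for `r ≤ j ≤ n`, every `F ∈ (x^u,y^v)^n J` with `deg_y F ≥ j v` lies in
`y^{v(j−r)} (x^u,y^v)^{n−(j−r)} J`, and every such `F` with `deg_y F < j v` lies
in `x^{u(n−j)} (x^u,y^v)^{j} J`. -/
theorem y_sections (u v : ℕ) (hu : 0 < u) (hv : 0 < v)
    (G : Finset (ℕ × ℕ)) (hne : G.Nonempty)
    (hanch : (∃ f ∈ G, f.1 = 0) ∧ (∃ f ∈ G, f.2 = 0))
    (hmin : ∀ p ∈ G, ∀ q ∈ G, p ≤ q → p = q)
    (r n : ℕ) (hr : ∀ f ∈ G, f.2 ≤ r * v) (hn : r ≤ n) :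
    ∀ j, r ≤ j → j ≤ n → ∀ m : ℕ × ℕ, memPowJ G u v n m →
      (j * v ≤ m.2 →
        ∃ i, i ≤ n - (j - r) ∧ ∃ f ∈ G,
          u * ((n - (j - r)) - i) + f.1 ≤ m.1 ∧
          v * (j - r) + (v * i + f.2) ≤ m.2) ∧
      (m.2 < j * v →
        ∃ i, i ≤ j ∧ ∃ f ∈ G,
          u * (n - j) + (u * (j - i) + f.1) ≤ m.1 ∧ v * i + f.2 ≤ m.2) := by
  intro j hrj hjn m hm
  obtain ⟨i, hin, f, hfG, hx, hy⟩ := hm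
  have hf2 := hr f hfG
  constructor
  · intro hjv
    refine ⟨i - (j - r), by omega, f, hfG, ?_, ?_⟩
    · have h1 : (n - (j - r)) - (i - (j - r)) ≤ n - i := by omega
      calc u * ((n - (j - r)) - (i - (j - r))) + f.1
          ≤ u * (n - i) + f.1 := by
            exact Nat.add_le_add_right (Nat.mul_le_mul_left u h1) _
        _ ≤ m.1 := hx
    · rcases le_or_gt (j - r) i with h | h
      · have : v * (j - r) + v * (i - (j - r)) = v * i := by
          rw [← Nat.mul_add]; congr 1; omega
        omega
      · have hi0 : i - (j - r) = 0 := by omega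
        rw [hi0]
        have h2 : v * (j - r) + v * r = v * j := by
          rw [← Nat.mul_add]; congr 1; omega
        have : v * (j - r) + (v * 0 + f.2) ≤ v * (j - r) + v * r := by
          have : f.2 ≤ v * r := by rw [Nat.mul_comm]; exact hf2
          omega
        calc v * (j - r) + (v * 0 + f.2) ≤ v * j := by omega
          _ = j * v := Nat.mul_comm v j
          _ ≤ m.2 := hjv
  · intro hjv
    have hij : i ≤ j := by
      by_contra h
      push_neg at h
      have : j * v < i * v := (Nat.mul_lt_mul_right hv).mpr h
      have : v * i ≤ m.2 := by omega
      rw [Nat.mul_comm] at this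
      omega
    refine ⟨i, hij, f, hfG, ?_, hy⟩
    have : u * (n - j) + u * (j - i) = u * (n - i) := by
      rw [← Nat.mul_add]; congr 1; omega
    omega
end

section
/- Let u, v be positive integers, J an anchored monomial ideal in k[x,y], and r ≥ ⌈dist_y(J)/v⌉. Then for every ℓ ≥ 0, the set of minimal generators of (x^u, y^v)^{r+1+ℓ} J is the disjoint union of y^{vℓ}·L, the sets x^{uj} y^{v(ℓ−j)}·M for 1 ≤ j ≤ ℓ, and x^{uℓ}·R, where L, M, R are respectively the minimal generators f of (x^u, y^v)^{r+1} J with deg_y f ≥ rv, with rv ≤ deg_y f < (r+1)v, and with deg_y f < rv. In particular μ((x^u,y^v)^{r+1+ℓ} J) = μ((x^u,y^v)^{r+1} J) + ℓ·|M|. -/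
/-- `m` is a minimal generator of `(x^u, y^v)^n · J`. -/
def isMinGen (G : Finset (ℕ × ℕ)) (u v n : ℕ) (m : ℕ × ℕ) : Prop :=
  memPowJ G u v n m ∧ ∀ m', memPowJ G u v n m' → m' ≤ m → m' = m

namespace PowJAux

variable {G : Finset (ℕ × ℕ)} {u v : ℕ}

lemma memPowJ_iff {n : ℕ} {m : ℕ × ℕ} :
    memPowJ G u v n m ↔
      ∃ i j, i + j = n ∧ ∃ f ∈ G, u * j + f.1 ≤ m.1 ∧ v * i + f.2 ≤ m.2 := by
  constructor
  · rintro ⟨i, hi, f, hf, h1, h2⟩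
    exact ⟨i, n - i, by omega, f, hf, h1, h2⟩
  · rintro ⟨i, j, hij, f, hf, h1, h2⟩
    refine ⟨i, by omega, f, hf, ?_, h2⟩
    rwa [show n - i = j by omega]

lemma memPowJ_mono {n : ℕ} {m m' : ℕ × ℕ} (h : memPowJ G u v n m) (hle : m ≤ m') :
    memPowJ G u v n m' := by
  obtain ⟨i, hi, f, hf, h1, h2⟩ := h
  exact ⟨i, hi, f, hf, h1.trans hle.1, h2.trans hle.2⟩

lemma up_mem {n : ℕ} {m : ℕ × ℕ} (h : memPowJ G u v n m) :
    memPowJ G u v (n + 1) (m.1, m.2 + v) := by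
  rw [memPowJ_iff] at h ⊢
  obtain ⟨i, j, hij, f, hf, h1, h2⟩ := h
  refine ⟨i + 1, j, by omega, f, hf, h1, ?_⟩
  have : v * (i + 1) = v * i + v := by ring
  simp only [this]
  omega

lemma right_mem {n : ℕ} {m : ℕ × ℕ} (h : memPowJ G u v n m) :
    memPowJ G u v (n + 1) (m.1 + u, m.2) := by
  rw [memPowJ_iff] at h ⊢
  obtain ⟨i, j, hij, f, hf, h1, h2⟩ := h
  refine ⟨i, j + 1, by omega, f, hf, ?_, h2⟩
  have : u * (j + 1) = u * j + u := by ring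
  simp only [this]
  omega

lemma mem_succ_elim {n : ℕ} {m : ℕ × ℕ} (h : memPowJ G u v (n + 1) m) :
    (u ≤ m.1 ∧ memPowJ G u v n (m.1 - u, m.2)) ∨
      (v ≤ m.2 ∧ memPowJ G u v n (m.1, m.2 - v)) := by
  rw [memPowJ_iff] at h
  obtain ⟨i, j, hij, f, hf, h1, h2⟩ := h
  rcases Nat.eq_zero_or_pos j with hj | hj
  · subst hj
    have hi : i = n + 1 := by omega
    subst hi
    have e : v * (n + 1) = v * n + v := by ring
    rw [e] at h2
    refine Or.inr ⟨by omega, ?_⟩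
    rw [memPowJ_iff]
    exact ⟨n, 0, by omega, f, hf, by simpa using h1, by simp; omega⟩
  · obtain ⟨j', rfl⟩ : ∃ j', j = j' + 1 := ⟨j - 1, by omega⟩
    have e : u * (j' + 1) = u * j' + u := by ring
    rw [e] at h1
    refine Or.inl ⟨by omega, ?_⟩
    rw [memPowJ_iff]
    exact ⟨i, j', by omega, f, hf, by simp; omega, h2⟩

lemma slide_up {n : ℕ} {a : ℕ × ℕ} (h : memPowJ G u v n a) (h2 : a.2 + v < n * v) :
    u ≤ a.1 ∧ memPowJ G u v n (a.1 - u, a.2 + v) := by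
  rw [memPowJ_iff] at h
  obtain ⟨i, j, hij, f, hf, hx, hy⟩ := h
  have hj : 1 ≤ j := by
    by_contra hc
    have hi : i = n := by omega
    rw [hi] at hy
    rw [show n * v = v * n by ring] at h2
    omega
  obtain ⟨j', rfl⟩ : ∃ j', j = j' + 1 := ⟨j - 1, by omega⟩
  have e : u * (j' + 1) = u * j' + u := by ring
  rw [e] at hx
  refine ⟨by omega, ?_⟩
  rw [memPowJ_iff]
  refine ⟨i + 1, j', by omega, f, hf, by simp; omega, ?_⟩
  have e2 : v * (i + 1) = v * i + v := by ring
  simp only [e2]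
  simp; omega

lemma slide_down {r n : ℕ} (hr : ∀ f ∈ G, f.2 ≤ r * v) {a : ℕ × ℕ}
    (h : memPowJ G u v n a) :
    (v ≤ a.2 ∧ memPowJ G u v n (a.1 + u, a.2 - v)) ∨
      (∃ c, c ≤ r * v ∧ c ≤ a.2 ∧ memPowJ G u v n (a.1, c)) := by
  rw [memPowJ_iff] at h
  obtain ⟨i, j, hij, f, hf, hx, hy⟩ := h
  rcases Nat.eq_zero_or_pos i with hi | hi
  · subst hi
    have hjn : j = n := by omega
    rw [hjn] at hx
    refine Or.inr ⟨f.2, hr f hf, by omega, ?_⟩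
    rw [memPowJ_iff]
    exact ⟨0, n, by omega, f, hf, hx, by simp⟩
  · obtain ⟨i', rfl⟩ : ∃ i', i = i' + 1 := ⟨i - 1, by omega⟩
    have e : v * (i' + 1) = v * i' + v := by ring
    rw [e] at hy
    refine Or.inl ⟨by omega, ?_⟩
    rw [memPowJ_iff]
    refine ⟨i', j + 1, by omega, f, hf, ?_, by simp; omega⟩
    have e2 : u * (j + 1) = u * j + u := by ring
    simp only [e2]
    simp; omega


lemma min_right_intro {n : ℕ} {g : ℕ × ℕ} (hg : isMinGen G u v n g)
    (hband : g.2 < n * v) : isMinGen G u v (n + 1) (g.1 + u, g.2) := by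
  refine ⟨right_mem hg.1, ?_⟩
  intro m' hm' hle
  rw [Prod.le_def] at hle
  obtain ⟨hle1, hle2⟩ := hle
  rcases mem_succ_elim hm' with ⟨hum, ha⟩ | ⟨hvm, ha⟩
  · have heq : (m'.1 - u, m'.2) = g :=
      hg.2 _ ha (Prod.le_def.mpr ⟨by simp; omega, by simpa using hle2⟩)
    have e1 : m'.1 - u = g.1 := by rw [← heq]
    have e2 : m'.2 = g.2 := by rw [← heq]
    have : m' = (m'.1, m'.2) := rfl
    rw [this]
    rw [Prod.mk.injEq]
    omega
  · have hlt : (m'.1, m'.2 - v).2 + v < n * v := by simp; omega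
    obtain ⟨hum, hb⟩ := slide_up ha hlt
    simp only at hum hb
    rw [show m'.2 - v + v = m'.2 by omega] at hb
    have heq : (m'.1 - u, m'.2) = g :=
      hg.2 _ hb (Prod.le_def.mpr ⟨by simp; omega, by simpa using hle2⟩)
    have e1 : m'.1 - u = g.1 := by rw [← heq]
    have e2 : m'.2 = g.2 := by rw [← heq]
    have : m' = (m'.1, m'.2) := rfl
    rw [this, Prod.mk.injEq]
    omega

lemma min_up_intro (hu : 0 < u) {r n : ℕ} (hr : ∀ f ∈ G, f.2 ≤ r * v)
    (hn : r + 1 ≤ n) {g : ℕ × ℕ} (hg : isMinGen G u v n g)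
    (hband : n * v ≤ g.2 + v) : isMinGen G u v (n + 1) (g.1, g.2 + v) := by
  refine ⟨up_mem hg.1, ?_⟩
  intro m' hm' hle
  rw [Prod.le_def] at hle
  obtain ⟨hle1, hle2⟩ := hle
  simp only at hle1 hle2
  rcases mem_succ_elim hm' with ⟨hum, ha⟩ | ⟨hvm, ha⟩
  · rcases slide_down hr ha with ⟨hva, hb⟩ | ⟨c, hcr, hca, hc⟩
    · simp only at hva hb
      rw [show m'.1 - u + u = m'.1 by omega] at hb
      have heq : (m'.1, m'.2 - v) = g :=
        hg.2 _ hb (Prod.le_def.mpr ⟨by simpa using hle1, by simp; omega⟩)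
      have e1 : m'.1 = g.1 := by rw [← heq]
      have e2 : m'.2 - v = g.2 := by rw [← heq]
      have : m' = (m'.1, m'.2) := rfl
      rw [this, Prod.mk.injEq]
      omega
    · exfalso
      simp only at hca hc
      have hrle : (r + 1) * v ≤ n * v := Nat.mul_le_mul_right v hn
      have hrv : (r + 1) * v = r * v + v := by ring
      have heq : (m'.1 - u, c) = g :=
        hg.2 _ hc (Prod.le_def.mpr ⟨by simp; omega, by simp; omega⟩)
      have e1 : m'.1 - u = g.1 := by rw [← heq]
      omega
  · have heq : (m'.1, m'.2 - v) = g :=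
      hg.2 _ ha (Prod.le_def.mpr ⟨by simpa using hle1, by simp; omega⟩)
    have e1 : m'.1 = g.1 := by rw [← heq]
    have e2 : m'.2 - v = g.2 := by rw [← heq]
    have : m' = (m'.1, m'.2) := rfl
    rw [this, Prod.mk.injEq]
    omega

lemma min_succ_elim (hu : 0 < u) (hv : 0 < v) {r n : ℕ}
    (hr : ∀ f ∈ G, f.2 ≤ r * v) (hn : r + 1 ≤ n) {h : ℕ × ℕ}
    (hh : isMinGen G u v (n + 1) h) :
    (∃ g, isMinGen G u v n g ∧ n * v ≤ g.2 + v ∧ h = (g.1, g.2 + v)) ∨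
      (∃ g, isMinGen G u v n g ∧ g.2 < n * v ∧ h = (g.1 + u, g.2)) := by
  by_cases hy : h.2 < n * v
  · -- right branch
    have key : u ≤ h.1 ∧ memPowJ G u v n (h.1 - u, h.2) := by
      rcases mem_succ_elim hh.1 with ⟨hum, ha⟩ | ⟨hvm, ha⟩
      · exact ⟨hum, ha⟩
      · have hlt : (h.1, h.2 - v).2 + v < n * v := by simp; omega
        obtain ⟨hum, hb⟩ := slide_up ha hlt
        simp only at hum hb
        rw [show h.2 - v + v = h.2 by omega] at hb
        exact ⟨hum, hb⟩
    obtain ⟨hu1, ha⟩ := key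
    refine Or.inr ⟨(h.1 - u, h.2), ⟨ha, ?_⟩, by simpa using hy, ?_⟩
    · intro m' hm' hle
      rw [Prod.le_def] at hle
      simp only at hle
      have hmem : memPowJ G u v (n + 1) (m'.1 + u, m'.2) := right_mem hm'
      have heq : (m'.1 + u, m'.2) = h :=
        hh.2 _ hmem (Prod.le_def.mpr ⟨by simp; omega, by simp; omega⟩)
      have e1 : m'.1 + u = h.1 := by rw [← heq]
      have e2 : m'.2 = h.2 := by rw [← heq]
      have : m' = (m'.1, m'.2) := rfl
      rw [this, Prod.mk.injEq]
      omega
    · rw [Prod.ext_iff]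
      simp; omega
  · -- up branch
    push_neg at hy
    have hvn : v ≤ n * v := Nat.le_mul_of_pos_left v (by omega)
    have key : memPowJ G u v n (h.1, h.2 - v) := by
      rcases mem_succ_elim hh.1 with ⟨hum, ha⟩ | ⟨hvm, ha⟩
      · rcases slide_down hr ha with ⟨hva, hb⟩ | ⟨c, hcr, hca, hc⟩
        · simp only at hva hb
          rwa [show h.1 - u + u = h.1 by omega] at hb
        · exfalso
          simp only at hca hc
          have hmem : memPowJ G u v (n + 1) (h.1 - u + u, c) := right_mem hc
          rw [show h.1 - u + u = h.1 by omega] at hmem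
          have heq : (h.1, c) = h :=
            hh.2 _ hmem (Prod.le_def.mpr ⟨le_refl _, by simp; omega⟩)
          have e2 : c = h.2 := by rw [← heq]
          have hrlt : r * v < n * v := by
            have : (r + 1) * v ≤ n * v := Nat.mul_le_mul_right v hn
            have e : (r + 1) * v = r * v + v := by ring
            omega
          omega
      · exact ha
    refine Or.inl ⟨(h.1, h.2 - v), ⟨key, ?_⟩, by simp; omega, ?_⟩
    · intro m' hm' hle
      rw [Prod.le_def] at hle
      simp only at hle
      have hmem : memPowJ G u v (n + 1) (m'.1, m'.2 + v) := up_mem hm'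
      have heq : (m'.1, m'.2 + v) = h :=
        hh.2 _ hmem (Prod.le_def.mpr ⟨by simp; omega, by simp; omega⟩)
      have e1 : m'.1 = h.1 := by rw [← heq]
      have e2 : m'.2 + v = h.2 := by rw [← heq]
      have : m' = (m'.1, m'.2) := rfl
      rw [this, Prod.mk.injEq]
      omega
    · rw [Prod.ext_iff]
      simp; omega

lemma step (hu : 0 < u) (hv : 0 < v) {r : ℕ} (hr : ∀ f ∈ G, f.2 ≤ r * v)
    {n : ℕ} (hn : r + 1 ≤ n) :
    {m : ℕ × ℕ | isMinGen G u v (n + 1) m} =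
      (fun g : ℕ × ℕ => (g.1, g.2 + v)) ''
          {g : ℕ × ℕ | isMinGen G u v n g ∧ n * v ≤ g.2 + v} ∪
        (fun g : ℕ × ℕ => (g.1 + u, g.2)) ''
          {g : ℕ × ℕ | isMinGen G u v n g ∧ g.2 < n * v} := by
  ext h
  simp only [Set.mem_setOf_eq, Set.mem_union, Set.mem_image]
  constructor
  · intro hh
    rcases min_succ_elim hu hv hr hn hh with ⟨g, h1, h2, h3⟩ | ⟨g, h1, h2, h3⟩
    · exact Or.inl ⟨g, ⟨h1, h2⟩, h3.symm⟩
    · exact Or.inr ⟨g, ⟨h1, h2⟩, h3.symm⟩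
  · rintro (⟨g, ⟨h1, h2⟩, rfl⟩ | ⟨g, ⟨h1, h2⟩, rfl⟩)
    · exact min_up_intro hu hr hn h1 h2
    · exact min_right_intro h1 h2

lemma minGen_finite (G : Finset (ℕ × ℕ)) (u v n : ℕ) :
    {m : ℕ × ℕ | isMinGen G u v n m}.Finite := by
  apply Set.Finite.subset
    (Set.Finite.image (fun p : ℕ × (ℕ × ℕ) => (u * (n - p.1) + p.2.1, v * p.1 + p.2.2))
      ((Set.finite_Iic n).prod G.finite_toSet))
  intro h hh
  obtain ⟨⟨i, hi, f, hf, h1, h2⟩, hmin2⟩ := hh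
  have hp : memPowJ G u v n (u * (n - i) + f.1, v * i + f.2) :=
    ⟨i, hi, f, hf, le_refl _, le_refl _⟩
  have heq := hmin2 _ hp (Prod.le_def.mpr ⟨h1, h2⟩)
  exact ⟨(i, f), ⟨hi, hf⟩, heq⟩


lemma charP (hu : 0 < u) (hv : 0 < v) {r : ℕ} (hr : ∀ f ∈ G, f.2 ≤ r * v) (ℓ : ℕ) :
    ∀ m : ℕ × ℕ, isMinGen G u v (r + 1 + ℓ) m ↔
      ((∃ g, (isMinGen G u v (r + 1) g ∧ r * v ≤ g.2) ∧ m = (g.1, g.2 + v * ℓ)) ∨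
        (∃ j k g, j + k = ℓ ∧ 1 ≤ j ∧
          (isMinGen G u v (r + 1) g ∧ r * v ≤ g.2 ∧ g.2 < (r + 1) * v) ∧
          m = (g.1 + u * j, g.2 + v * k)) ∨
        (∃ g, (isMinGen G u v (r + 1) g ∧ g.2 < r * v) ∧ m = (g.1 + u * ℓ, g.2))) := by
  induction ℓ with
  | zero =>
    intro m
    simp only [Nat.add_zero, Nat.mul_zero, Nat.add_zero]
    constructor
    · intro hm
      rcases le_or_gt (r * v) m.2 with hc | hc
      · exact Or.inl ⟨m, ⟨hm, hc⟩, rfl⟩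
      · exact Or.inr (Or.inr ⟨m, ⟨hm, hc⟩, rfl⟩)
    · rintro (⟨g, ⟨hg, _⟩, rfl⟩ | ⟨j, k, g, hjk, hj, _, _⟩ | ⟨g, ⟨hg, _⟩, rfl⟩)
      · exact hg
      · omega
      · exact hg
  | succ ℓ IH =>
    intro m
    have hn : r + 1 ≤ r + 1 + ℓ := by omega
    have hlev : r + 1 + (ℓ + 1) = (r + 1 + ℓ) + 1 := by omega
    rw [hlev]
    have hstep := step hu hv hr hn
    constructor
    · intro hm
      have hm' : m ∈ {m : ℕ × ℕ | isMinGen G u v ((r + 1 + ℓ) + 1) m} := hm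
      rw [hstep] at hm'
      simp only [Set.mem_union, Set.mem_image, Set.mem_setOf_eq] at hm'
      rcases hm' with ⟨g, ⟨hg, hband⟩, rfl⟩ | ⟨g, ⟨hg, hband⟩, rfl⟩
      · -- came from the "up" part
        rcases (IH g).mp hg with ⟨f, hfL, rfl⟩ | ⟨j, k, f, hjk, hj, hfM, rfl⟩ |
          ⟨f, hfR, rfl⟩
        · refine Or.inl ⟨f, hfL, ?_⟩
          have e : f.2 + v * ℓ + v = f.2 + v * (ℓ + 1) := by ring
          exact Prod.ext_iff.mpr ⟨rfl, e⟩
        · exfalso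
          subst hjk
          simp only at hband
          have e1 : (r + 1 + (j + k)) * v = r * v + v + v * j + v * k := by ring
          have e2 : (r + 1) * v = r * v + v := by ring
          have e3 : v * 1 ≤ v * j := Nat.mul_le_mul_left v hj
          obtain ⟨_, _, hfM3⟩ := hfM
          omega
        · exfalso
          simp only at hband
          obtain ⟨_, hfR2⟩ := hfR
          have e1 : (r + 1 + ℓ) * v = r * v + v + v * ℓ := by ring
          omega
      · -- came from the "right" part
        rcases (IH g).mp hg with ⟨f, hfL, rfl⟩ | ⟨j, k, f, hjk, hj, hfM, rfl⟩ |
          ⟨f, hfR, rfl⟩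
        · -- becomes the j = 1 middle part
          simp only at hband
          have e1 : (r + 1 + ℓ) * v = r * v + v + v * ℓ := by ring
          have e2 : (r + 1) * v = r * v + v := by ring
          refine Or.inr (Or.inl ⟨1, ℓ, f, by omega, le_refl 1,
            ⟨hfL.1, hfL.2, by omega⟩, ?_⟩)
          have e : f.1 + u = f.1 + u * 1 := by ring
          exact Prod.ext_iff.mpr ⟨e, rfl⟩
        · refine Or.inr (Or.inl ⟨j + 1, k, f, by omega, by omega, hfM, ?_⟩)
          have e : f.1 + u * j + u = f.1 + u * (j + 1) := by ring
          exact Prod.ext_iff.mpr ⟨e, rfl⟩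
        · refine Or.inr (Or.inr ⟨f, hfR, ?_⟩)
          have e : f.1 + u * ℓ + u = f.1 + u * (ℓ + 1) := by ring
          exact Prod.ext_iff.mpr ⟨e, rfl⟩
    · rintro (⟨f, hfL, rfl⟩ | ⟨j, k, f, hjk, hj, hfM, rfl⟩ | ⟨f, hfR, rfl⟩)
      · -- up image of the L part
        have h1 : isMinGen G u v (r + 1 + ℓ) (f.1, f.2 + v * ℓ) :=
          (IH _).mpr (Or.inl ⟨f, hfL, rfl⟩)
        have h2 : (r + 1 + ℓ) * v ≤ (f.1, f.2 + v * ℓ).2 + v := by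
          simp only
          have e1 : (r + 1 + ℓ) * v = r * v + v + v * ℓ := by ring
          have := hfL.2
          omega
        have hthis := min_up_intro hu hr hn h1 h2
        have e' : f.2 + v * (ℓ + 1) = f.2 + v * ℓ + v := by ring
        rw [show ((f.1, f.2 + v * (ℓ + 1)) : ℕ × ℕ) = (f.1, f.2 + v * ℓ + v) from
          Prod.ext_iff.mpr ⟨rfl, e'⟩]
        exact hthis
      · -- middle parts
        obtain ⟨j', rfl⟩ : ∃ j', j = j' + 1 := ⟨j - 1, by omega⟩
        rcases Nat.eq_zero_or_pos j' with hj0 | hj0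
        · subst hj0
          have hk : f.2 + v * k = f.2 + v * ℓ := by rw [show k = ℓ by omega]
          have h1 : isMinGen G u v (r + 1 + ℓ) (f.1, f.2 + v * ℓ) :=
            (IH _).mpr (Or.inl ⟨f, ⟨hfM.1, hfM.2.1⟩, rfl⟩)
          have h2 : (f.1, f.2 + v * ℓ).2 < (r + 1 + ℓ) * v := by
            simp only
            have e1 : (r + 1 + ℓ) * v = r * v + v + v * ℓ := by ring
            have e2 : (r + 1) * v = r * v + v := by ring
            have := hfM.2.2
            omega
          have hthis := min_right_intro h1 h2
          have e' : f.1 + u * (0 + 1) = f.1 + u := by ring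
          rw [show ((f.1 + u * (0 + 1), f.2 + v * k) : ℕ × ℕ) = (f.1 + u, f.2 + v * ℓ) from
            Prod.ext_iff.mpr ⟨e', hk⟩]
          exact hthis
        · have h1 : isMinGen G u v (r + 1 + ℓ) (f.1 + u * j', f.2 + v * k) :=
            (IH _).mpr (Or.inr (Or.inl ⟨j', k, f, by omega, hj0, hfM, rfl⟩))
          have h2 : (f.1 + u * j', f.2 + v * k).2 < (r + 1 + ℓ) * v := by
            simp only
            have e1 : (r + 1 + ℓ) * v = r * v + v + v * ℓ := by ring
            have e2 : (r + 1) * v = r * v + v := by ring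
            have e3 : v * k ≤ v * ℓ := Nat.mul_le_mul_left v (by omega)
            have := hfM.2.2
            omega
          have hthis := min_right_intro h1 h2
          have e' : f.1 + u * (j' + 1) = f.1 + u * j' + u := by ring
          rw [show ((f.1 + u * (j' + 1), f.2 + v * k) : ℕ × ℕ) =
              (f.1 + u * j' + u, f.2 + v * k) from Prod.ext_iff.mpr ⟨e', rfl⟩]
          exact hthis
      · have h1 : isMinGen G u v (r + 1 + ℓ) (f.1 + u * ℓ, f.2) :=
          (IH _).mpr (Or.inr (Or.inr ⟨f, hfR, rfl⟩))
        have h2 : (f.1 + u * ℓ, f.2).2 < (r + 1 + ℓ) * v := by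
          simp only
          have e1 : (r + 1 + ℓ) * v = r * v + v + v * ℓ := by ring
          have := hfR.2
          omega
        have hthis := min_right_intro h1 h2
        have e' : f.1 + u * (ℓ + 1) = f.1 + u * ℓ + u := by ring
        rw [show ((f.1 + u * (ℓ + 1), f.2) : ℕ × ℕ) = (f.1 + u * ℓ + u, f.2) from
          Prod.ext_iff.mpr ⟨e', rfl⟩]
        exact hthis


lemma band_eq (hu : 0 < u) (hv : 0 < v) {r : ℕ} (hr : ∀ f ∈ G, f.2 ≤ r * v) (ℓ : ℕ) :
    {g : ℕ × ℕ | isMinGen G u v (r + 1 + ℓ) g ∧ (r + 1 + ℓ) * v ≤ g.2 + v ∧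
        g.2 < (r + 1 + ℓ) * v} =
      (fun f : ℕ × ℕ => (f.1, f.2 + v * ℓ)) ''
        {f : ℕ × ℕ | isMinGen G u v (r + 1) f ∧ r * v ≤ f.2 ∧ f.2 < (r + 1) * v} := by
  ext g
  simp only [Set.mem_setOf_eq, Set.mem_image]
  constructor
  · rintro ⟨hg, hb1, hb2⟩
    rcases (charP hu hv hr ℓ g).mp hg with ⟨f, hfL, rfl⟩ | ⟨j, k, f, hjk, hj, hfM, rfl⟩ |
      ⟨f, hfR, rfl⟩
    · refine ⟨f, ⟨hfL.1, hfL.2, ?_⟩, rfl⟩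
      simp only at hb2
      have e1 : (r + 1 + ℓ) * v = r * v + v + v * ℓ := by ring
      have e2 : (r + 1) * v = r * v + v := by ring
      omega
    · exfalso
      subst hjk
      simp only at hb1
      have e1 : (r + 1 + (j + k)) * v = r * v + v + v * j + v * k := by ring
      have e2 : (r + 1) * v = r * v + v := by ring
      have e3 : v * 1 ≤ v * j := Nat.mul_le_mul_left v hj
      obtain ⟨_, _, hfM3⟩ := hfM
      omega
    · exfalso
      simp only at hb1
      obtain ⟨_, hfR2⟩ := hfR
      have e1 : (r + 1 + ℓ) * v = r * v + v + v * ℓ := by ring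
      omega
  · rintro ⟨f, hfM, rfl⟩
    refine ⟨(charP hu hv hr ℓ _).mpr (Or.inl ⟨f, ⟨hfM.1, hfM.2.1⟩, rfl⟩), ?_, ?_⟩ <;>
      · simp only
        have e1 : (r + 1 + ℓ) * v = r * v + v + v * ℓ := by ring
        have e2 : (r + 1) * v = r * v + v := by ring
        have h2 := hfM.2.1
        have h3 := hfM.2.2
        omega

lemma cardP (hu : 0 < u) (hv : 0 < v) {r : ℕ} (hr : ∀ f ∈ G, f.2 ≤ r * v) (ℓ : ℕ) :
    {m : ℕ × ℕ | isMinGen G u v (r + 1 + ℓ) m}.ncard =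
      {m : ℕ × ℕ | isMinGen G u v (r + 1) m}.ncard +
        ℓ * {f : ℕ × ℕ | isMinGen G u v (r + 1) f ∧ r * v ≤ f.2 ∧
              f.2 < (r + 1) * v}.ncard := by
  induction ℓ with
  | zero => simp
  | succ ℓ IH =>
    have hn : r + 1 ≤ r + 1 + ℓ := by omega
    have hlev : r + 1 + (ℓ + 1) = (r + 1 + ℓ) + 1 := by omega
    rw [hlev]
    have hstep := step hu hv hr hn
    have finA := minGen_finite G u v (r + 1 + ℓ)
    have finX : {g : ℕ × ℕ | isMinGen G u v (r + 1 + ℓ) g ∧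
        (r + 1 + ℓ) * v ≤ g.2 + v}.Finite := finA.subset (fun g hg => hg.1)
    have finY : {g : ℕ × ℕ | isMinGen G u v (r + 1 + ℓ) g ∧
        g.2 < (r + 1 + ℓ) * v}.Finite := finA.subset (fun g hg => hg.1)
    have hinj1 : Function.Injective (fun g : ℕ × ℕ => ((g.1, g.2 + v) : ℕ × ℕ)) := by
      intro a b h
      rw [Prod.ext_iff] at h ⊢
      simp only at h
      exact ⟨h.1, by omega⟩
    have hinj2 : Function.Injective (fun g : ℕ × ℕ => ((g.1 + u, g.2) : ℕ × ℕ)) := by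
      intro a b h
      rw [Prod.ext_iff] at h ⊢
      simp only at h
      exact ⟨by omega, h.2⟩
    have hinj3 : Function.Injective (fun f : ℕ × ℕ => ((f.1, f.2 + v * ℓ) : ℕ × ℕ)) := by
      intro a b h
      rw [Prod.ext_iff] at h ⊢
      simp only at h
      exact ⟨h.1, by omega⟩
    have hdisj : Disjoint
        ((fun g : ℕ × ℕ => ((g.1, g.2 + v) : ℕ × ℕ)) ''
          {g : ℕ × ℕ | isMinGen G u v (r + 1 + ℓ) g ∧ (r + 1 + ℓ) * v ≤ g.2 + v})
        ((fun g : ℕ × ℕ => ((g.1 + u, g.2) : ℕ × ℕ)) ''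
          {g : ℕ × ℕ | isMinGen G u v (r + 1 + ℓ) g ∧ g.2 < (r + 1 + ℓ) * v}) := by
      rw [Set.disjoint_left]
      rintro a ⟨g, hg, rfl⟩ ⟨g', hg', heq⟩
      have e2 := (Prod.ext_iff.mp heq).2
      simp only at e2
      have h1 := hg.2
      have h2 := hg'.2
      omega
    rw [hstep, Set.ncard_union_eq hdisj (finX.image _) (finY.image _),
      Set.ncard_image_of_injective _ hinj1, Set.ncard_image_of_injective _ hinj2]
    have hXY : {g : ℕ × ℕ | isMinGen G u v (r + 1 + ℓ) g ∧ (r + 1 + ℓ) * v ≤ g.2 + v} ∪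
        {g : ℕ × ℕ | isMinGen G u v (r + 1 + ℓ) g ∧ g.2 < (r + 1 + ℓ) * v} =
        {m : ℕ × ℕ | isMinGen G u v (r + 1 + ℓ) m} := by
      ext g
      simp only [Set.mem_union, Set.mem_setOf_eq]
      constructor
      · rintro (⟨h, _⟩ | ⟨h, _⟩) <;> exact h
      · intro h
        rcases lt_or_ge g.2 ((r + 1 + ℓ) * v) with hc | hc
        · exact Or.inr ⟨h, hc⟩
        · exact Or.inl ⟨h, by omega⟩
    have hXiY : {g : ℕ × ℕ | isMinGen G u v (r + 1 + ℓ) g ∧ (r + 1 + ℓ) * v ≤ g.2 + v} ∩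
        {g : ℕ × ℕ | isMinGen G u v (r + 1 + ℓ) g ∧ g.2 < (r + 1 + ℓ) * v} =
        {g : ℕ × ℕ | isMinGen G u v (r + 1 + ℓ) g ∧ (r + 1 + ℓ) * v ≤ g.2 + v ∧
          g.2 < (r + 1 + ℓ) * v} := by
      ext g
      simp only [Set.mem_inter_iff, Set.mem_setOf_eq]
      tauto
    have hcnt := Set.ncard_union_add_ncard_inter
      {g : ℕ × ℕ | isMinGen G u v (r + 1 + ℓ) g ∧ (r + 1 + ℓ) * v ≤ g.2 + v}
      {g : ℕ × ℕ | isMinGen G u v (r + 1 + ℓ) g ∧ g.2 < (r + 1 + ℓ) * v} finX finY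
    rw [hXY, hXiY, band_eq hu hv hr ℓ, Set.ncard_image_of_injective _ hinj3] at hcnt
    have e : (ℓ + 1) * {f : ℕ × ℕ | isMinGen G u v (r + 1) f ∧ r * v ≤ f.2 ∧
        f.2 < (r + 1) * v}.ncard = ℓ * {f : ℕ × ℕ | isMinGen G u v (r + 1) f ∧ r * v ≤ f.2 ∧
        f.2 < (r + 1) * v}.ncard + {f : ℕ × ℕ | isMinGen G u v (r + 1) f ∧ r * v ≤ f.2 ∧
        f.2 < (r + 1) * v}.ncard := by ring
    omega

end PowJAux

/-- Theorem generators-one-segment: For `u, v > 0`, `J` anchored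
with minimal generating set `G`, and `r` with `dist_y(J) ≤ r·v`: for all `ℓ ≥ 0`
the minimal generators of `(x^u,y^v)^{r+1+ℓ} J` are the (disjoint) union of
`y^{vℓ}·L`, the `x^{uj} y^{v(ℓ−j)}·M` for `1 ≤ j ≤ ℓ`, and `x^{uℓ}·R`, where
`L, M, R` consist of the minimal generators `f` of `(x^u,y^v)^{r+1} J` with
`deg_y f ≥ rv`, with `rv ≤ deg_y f < (r+1)v`, and with `deg_y f < rv`,
respectively.  In particular
`μ((x^u,y^v)^{r+1+ℓ} J) = μ((x^u,y^v)^{r+1} J) + ℓ·|M|`. -/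
theorem generators_one_segment (u v : ℕ) (hu : 0 < u) (hv : 0 < v)
    (G : Finset (ℕ × ℕ)) (hne : G.Nonempty)
    (hanch : (∃ f ∈ G, f.1 = 0) ∧ (∃ f ∈ G, f.2 = 0))
    (hmin : ∀ p ∈ G, ∀ q ∈ G, p ≤ q → p = q)
    (r : ℕ) (hr : ∀ f ∈ G, f.2 ≤ r * v) (ℓ : ℕ) :
    ({m : ℕ × ℕ | isMinGen G u v (r + 1 + ℓ) m} =
      (fun f => f + ((0 : ℕ), v * ℓ)) ''
          {f : ℕ × ℕ | isMinGen G u v (r + 1) f ∧ r * v ≤ f.2} ∪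
        (⋃ j ∈ Set.Icc 1 ℓ,
          (fun f => f + (u * j, v * (ℓ - j))) ''
            {f : ℕ × ℕ | isMinGen G u v (r + 1) f ∧ r * v ≤ f.2 ∧ f.2 < (r + 1) * v}) ∪
        (fun f => f + (u * ℓ, (0 : ℕ))) ''
          {f : ℕ × ℕ | isMinGen G u v (r + 1) f ∧ f.2 < r * v}) ∧
    {m : ℕ × ℕ | isMinGen G u v (r + 1 + ℓ) m}.ncard =
      {m : ℕ × ℕ | isMinGen G u v (r + 1) m}.ncard +
        ℓ * {f : ℕ × ℕ | isMinGen G u v (r + 1) f ∧ r * v ≤ f.2 ∧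
              f.2 < (r + 1) * v}.ncard := by
  refine ⟨?_, PowJAux.cardP hu hv hr ℓ⟩
  ext m
  simp only [Set.mem_setOf_eq, Set.mem_union, Set.mem_image, Set.mem_iUnion,
    Set.mem_Icc, exists_prop]
  constructor
  · intro h
    rcases (PowJAux.charP hu hv hr ℓ m).mp h with ⟨f, hf, rfl⟩ |
      ⟨j, k, f, hjk, hj, hf, rfl⟩ | ⟨f, hf, rfl⟩
    · refine Or.inl (Or.inl ⟨f, hf, ?_⟩)
      exact Prod.ext_iff.mpr ⟨by simp, rfl⟩
    · refine Or.inl (Or.inr ⟨j, ⟨hj, by omega⟩, f, hf, ?_⟩)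
      rw [show ℓ - j = k by omega]
      exact Prod.ext_iff.mpr ⟨rfl, rfl⟩
    · refine Or.inr ⟨f, hf, ?_⟩
      exact Prod.ext_iff.mpr ⟨rfl, by simp⟩
  · rintro ((⟨f, hf, rfl⟩ | ⟨j, ⟨hj1, hj2⟩, f, hf, rfl⟩) | ⟨f, hf, rfl⟩)
    · refine (PowJAux.charP hu hv hr ℓ _).mpr (Or.inl ⟨f, hf, ?_⟩)
      exact Prod.ext_iff.mpr ⟨by simp, rfl⟩
    · refine (PowJAux.charP hu hv hr ℓ _).mpr
        (Or.inr (Or.inl ⟨j, ℓ - j, f, by omega, hj1, hf, ?_⟩))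
      exact Prod.ext_iff.mpr ⟨rfl, rfl⟩
    · refine (PowJAux.charP hu hv hr ℓ _).mpr (Or.inr (Or.inr ⟨f, hf, ?_⟩))
      exact Prod.ext_iff.mpr ⟨rfl, by simp⟩
end

section
/- Let u, v be positive integers, J an anchored monomial ideal in k[x,y], and r ≥ ⌈dist_y(J)/v⌉. Then the set M = { f ∈ minimal generators of (x^u, y^v)^{r+1} J : rv ≤ deg_y f < (r+1)v } is nonempty. -/
private lemma key_mono {C a b a' b' : ℕ} (hb' : b' < C) (h : a * C + b ≤ a' * C + b') :
    a ≤ a' := by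
  by_contra hc
  push_neg at hc
  have h2 : (a' + 1) * C ≤ a * C := Nat.mul_le_mul_right C hc
  rw [add_mul, one_mul] at h2
  linarith

private lemma strip_unique {v i j e P : ℕ} (hi1 : P ≤ v * i + e) (hi2 : v * i + e < P + v)
    (hj1 : P ≤ v * j + e) (hj2 : v * j + e < P + v) : i = j := by
  rcases lt_trichotomy i j with h | h | h
  · have : v * (i + 1) ≤ v * j := Nat.mul_le_mul_left v h
    rw [Nat.mul_add, Nat.mul_one] at this
    linarith
  · exact h
  · have : v * (j + 1) ≤ v * i := Nat.mul_le_mul_left v h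
    rw [Nat.mul_add, Nat.mul_one] at this
    linarith

/-- Corollary find-g: For `u, v > 0`, `J` anchored with minimal
generating set `G`, and `r` with `dist_y(J) ≤ r·v`, the set
`M = { f ∈ G((x^u,y^v)^{r+1} J) : rv ≤ deg_y f < (r+1)v }` is nonempty. -/
theorem middle_segment_nonempty (u v : ℕ) (hu : 0 < u) (hv : 0 < v)
    (G : Finset (ℕ × ℕ)) (hne : G.Nonempty)
    (hanch : (∃ f ∈ G, f.1 = 0) ∧ (∃ f ∈ G, f.2 = 0))
    (hmin : ∀ p ∈ G, ∀ q ∈ G, p ≤ q → p = q)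
    (r : ℕ) (hr : ∀ f ∈ G, f.2 ≤ r * v) :
    ∃ m : ℕ × ℕ, isMinGen G u v (r + 1) m ∧ r * v ≤ m.2 ∧ m.2 < (r + 1) * v := by
  classical
  -- ceiling index: minimal j with r*v ≤ v*j + g.2
  set idx : ℕ × ℕ → ℕ := fun g => (r * v - g.2 + v - 1) / v with hidx
  have idx_spec : ∀ g ∈ G,
      r * v ≤ v * idx g + g.2 ∧ v * idx g + g.2 < r * v + v ∧ idx g ≤ r := by
    intro g hg
    have hg2 : g.2 ≤ r * v := hr g hg
    have h1 := Nat.div_add_mod (r * v - g.2 + v - 1) v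
    have h2 : (r * v - g.2 + v - 1) % v < v := Nat.mod_lt _ hv
    have hb1 : r * v ≤ v * idx g + g.2 := by
      simp only [hidx]
      omega
    have hb2 : v * idx g + g.2 < r * v + v := by
      simp only [hidx]
      omega
    refine ⟨hb1, hb2, ?_⟩
    have : v * idx g < v * (r + 1) := by
      have : v * (r + 1) = r * v + v := by ring
      omega
    exact Nat.lt_succ_iff.mp (Nat.lt_of_mul_lt_mul_left this)
  -- strip candidates
  set c : ℕ × ℕ → ℕ × ℕ := fun g => (u * (r + 1 - idx g) + g.1, v * idx g + g.2) with hc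
  set C : ℕ := r * v + v with hC
  obtain ⟨m, hmS, hmmin⟩ := Finset.exists_min_image (G.image c)
    (fun p => p.1 * C + p.2) (hne.image c)
  obtain ⟨g0, hg0, hg0m⟩ := Finset.mem_image.mp hmS
  obtain ⟨hg0a, hg0b, hg0c⟩ := idx_spec g0 hg0
  have hSy : ∀ g ∈ G, (c g).2 < C := by
    intro g hg
    exact (idx_spec g hg).2.1
  -- m's y-degree in the strip
  have hm2a : r * v ≤ m.2 := by rw [← hg0m]; exact hg0a
  have hm2b : m.2 < r * v + v := by rw [← hg0m]; exact hg0b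
  -- key fact: any candidate point below m equals m
  have key : ∀ i ≤ r + 1, ∀ g ∈ G,
      u * (r + 1 - i) + g.1 ≤ m.1 → v * i + g.2 ≤ m.2 →
      (u * (r + 1 - i) + g.1, v * i + g.2) = m := by
    intro i hi g hg h1 h2
    obtain ⟨ha, hb, hcr⟩ := idx_spec g hg
    by_cases hcase : r * v ≤ v * i + g.2
    · -- i = idx g, so the point is the strip candidate c g
      have hieq : i = idx g := strip_unique hcase (lt_of_le_of_lt h2 hm2b) ha hb
      have hcgS : c g ∈ G.image c := Finset.mem_image_of_mem c hg
      have hk : m.1 * C + m.2 ≤ (c g).1 * C + (c g).2 := hmmin (c g) hcgS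
      have hx : m.1 ≤ (c g).1 := key_mono (hSy g hg) hk
      have hcg1 : (c g).1 = u * (r + 1 - i) + g.1 := by rw [hieq]
      have hcg2 : (c g).2 = v * i + g.2 := by rw [hieq]
      have hx1 : (c g).1 = m.1 := le_antisymm (hcg1 ▸ h1) hx
      have hy : m.2 ≤ (c g).2 := by
        rw [hx1] at hk
        linarith
      have hy1 : (c g).2 = m.2 := le_antisymm (hcg2 ▸ h2) hy
      exact Prod.ext (hcg1.symm.trans hx1) (hcg2.symm.trans hy1)
    · -- v * i + g.2 < r * v : contradiction via strictly smaller x-degree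
      push_neg at hcase
      exfalso
      have hij : i < idx g := by
        have : v * i < v * idx g := by omega
        exact Nat.lt_of_mul_lt_mul_left this
      have hcgS : c g ∈ G.image c := Finset.mem_image_of_mem c hg
      have hk : m.1 * C + m.2 ≤ (c g).1 * C + (c g).2 := hmmin (c g) hcgS
      have hx : m.1 ≤ (c g).1 := key_mono (hSy g hg) hk
      have hlt : u * (r + 1 - idx g) < u * (r + 1 - i) :=
        Nat.mul_lt_mul_of_le_of_lt (le_refl u) (by omega) hu
      simp only [hc] at hx
      omega
  refine ⟨m, ⟨⟨idx g0, by omega, g0, hg0, ?_, ?_⟩, ?_⟩, hm2a, by linarith [hm2b, show (r + 1) * v = r * v + v from by ring]⟩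
  · rw [← hg0m]
  · rw [← hg0m]
  · rintro m' ⟨i, hi, g, hg, h1, h2⟩ hle
    have := key i hi g hg (le_trans h1 hle.1) (le_trans h2 hle.2)
    -- the candidate point equals m, and it's ≤ m', so m ≤ m' ≤ m
    have hmle : m ≤ m' := this ▸ ⟨h1, h2⟩
    exact le_antisymm hle hmle
end

section
/- Let u, v be positive integers, J ⊆ k[x,y] an anchored monomial ideal, r ≥ ⌈dist_y(J)/v⌉, and let A, H, B be the r-segments of (x^u,y^v)J: writing g = x^α y^β for the minimal generator of (x^u,y^v)^{r+1}J of smallest y-degree ≥ rv, A = ((x^u,y^v)^{r+1}J) : y^β, H = ((x^u,y^v)^{r+1}J) : x^{α−u} y^β, and B = ((x^u,y^v)^{r+1}J) : x^α. Then for all ℓ ≥ 0, (x^u,y^v)^{r+1+ℓ} J = A ⊙ H^{⊙ℓ} ⊙ B, where ⊙ is the ideal link with respect to y. -/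
/-- x-exponent of the gcd of all monomials of the monomial set `S`. -/
noncomputable def gcdX (S : Set (ℕ × ℕ)) : ℕ := sInf {n | ∃ m ∈ S, m.1 = n}

/-- y-exponent of the gcd of all monomials of the monomial set `S`. -/
noncomputable def gcdY (S : Set (ℕ × ℕ)) : ℕ := sInf {n | ∃ m ∈ S, m.2 = n}

/-- The anchored ideal `red(S) = S : gcd(S)`. -/
noncomputable def redI (S : Set (ℕ × ℕ)) : Set (ℕ × ℕ) :=
  {m | (m.1 + gcdX S, m.2 + gcdY S) ∈ S}

/-- `dist_x(S)`: maximal x-degree among the minimal generators of `red(S)`. -/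
noncomputable def distXI (S : Set (ℕ × ℕ)) : ℕ :=
  sSup {n | ∃ m, Minimal (· ∈ redI S) m ∧ m.1 = n}

/-- `dist_y(S)`: maximal y-degree among the minimal generators of `red(S)`. -/
noncomputable def distYI (S : Set (ℕ × ℕ)) : ℕ :=
  sSup {n | ∃ m, Minimal (· ∈ redI S) m ∧ m.2 = n}

/-- The link `S ⊙ T = red(S)·y^{dist_y T} + red(T)·x^{dist_x S}` with respect to `y`. -/
noncomputable def link (S T : Set (ℕ × ℕ)) : Set (ℕ × ℕ) :=
  {m | distYI T ≤ m.2 ∧ (m.1, m.2 - distYI T) ∈ redI S} ∪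
    {m | distXI S ≤ m.1 ∧ (m.1 - distXI S, m.2) ∈ redI T}

/-- The monomial set of the ideal `(x^u, y^v)^n · J`, `J` generated by `G`. -/
def powJ (G : Finset (ℕ × ℕ)) (u v n : ℕ) : Set (ℕ × ℕ) :=
  {m | ∃ i, i ≤ n ∧ ∃ f ∈ G, u * (n - i) + f.1 ≤ m.1 ∧ v * i + f.2 ≤ m.2}

/-- Colon ideal `S : x^{t.1} y^{t.2}` by a monomial. -/
def colonM (S : Set (ℕ × ℕ)) (t : ℕ × ℕ) : Set (ℕ × ℕ) :=
  {m | (m.1 + t.1, m.2 + t.2) ∈ S}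

/-- `H^{⊙ℓ} ⊙ B`, right-associated iterated link. -/
noncomputable def hTail (H B : Set (ℕ × ℕ)) : ℕ → Set (ℕ × ℕ)
  | 0 => B
  | n + 1 => link H (hTail H B n)

namespace OSLaux

lemma mem_powJ {G : Finset (ℕ × ℕ)} {u v n : ℕ} {m : ℕ × ℕ} :
    m ∈ powJ G u v n ↔ ∃ i, i ≤ n ∧ ∃ f ∈ G, u * (n - i) + f.1 ≤ m.1 ∧ v * i + f.2 ≤ m.2 :=
  Iff.rfl

lemma powJ_mono {G : Finset (ℕ × ℕ)} {u v n : ℕ} {m m' : ℕ × ℕ}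
    (hm : m ∈ powJ G u v n) (h1 : m.1 ≤ m'.1) (h2 : m.2 ≤ m'.2) : m' ∈ powJ G u v n := by
  obtain ⟨i, hi, f, hf, hx, hy⟩ := hm
  exact ⟨i, hi, f, hf, hx.trans h1, hy.trans h2⟩

lemma genMem {G : Finset (ℕ × ℕ)} {u v n i : ℕ} {f : ℕ × ℕ} (hi : i ≤ n) (hf : f ∈ G) :
    (u * (n - i) + f.1, v * i + f.2) ∈ powJ G u v n :=
  ⟨i, hi, f, hf, le_rfl, le_rfl⟩

lemma exists_minimal_le (S : Set (ℕ × ℕ)) :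
    ∀ n (m : ℕ × ℕ), m.1 + m.2 ≤ n → m ∈ S → ∃ e, e ∈ S ∧ e ≤ m ∧ Minimal (· ∈ S) e := by
  intro n
  induction n with
  | zero =>
    intro m hm hmS
    refine ⟨m, hmS, le_rfl, hmS, fun y hy hle => ?_⟩
    have h1 : m.1 = 0 := by omega
    have h2 : m.2 = 0 := by omega
    exact ⟨by omega, by omega⟩
  | succ n ih =>
    intro m hm hmS
    by_cases h : Minimal (· ∈ S) m
    · exact ⟨m, hmS, le_rfl, h⟩
    · have : ∃ y ∈ S, y ≤ m ∧ ¬ m ≤ y := by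
        by_contra hc
        push_neg at hc
        exact h ⟨hmS, fun y hy hle => hc y hy hle⟩
      obtain ⟨y, hyS, hym, hnmy⟩ := this
      have hlt : y.1 + y.2 < m.1 + m.2 := by
        rcases hym with ⟨ha, hb⟩
        by_contra hc
        exact hnmy ⟨by omega, by omega⟩
      obtain ⟨e, heS, hey, hemin⟩ := ih y (by omega) hyS
      exact ⟨e, heS, hey.trans hym, hemin⟩

lemma powJ_succ {G : Finset (ℕ × ℕ)} {u v n : ℕ} {m : ℕ × ℕ} :
    m ∈ powJ G u v (n + 1) ↔
      (u ≤ m.1 ∧ (m.1 - u, m.2) ∈ powJ G u v n) ∨ (v ≤ m.2 ∧ (m.1, m.2 - v) ∈ powJ G u v n) := by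
  constructor
  · rintro ⟨i, hi, f, hf, hx, hy⟩
    by_cases h : i ≤ n
    · left
      have e1 : n + 1 - i = (n - i) + 1 := by omega
      rw [e1, mul_add, mul_one] at hx
      exact ⟨by omega, ⟨i, h, f, hf, by omega, hy⟩⟩
    · have hin : i = n + 1 := by omega
      subst hin
      right
      rw [Nat.sub_self, mul_zero, zero_add] at hx
      have e2 : v * (n + 1) = v * n + v := by ring
      rw [e2] at hy
      refine ⟨by omega, ⟨n, le_rfl, f, hf, ?_, by omega⟩⟩
      rw [Nat.sub_self, mul_zero, zero_add]
      omega
  · rintro (⟨hu, i, hi, f, hf, hx, hy⟩ | ⟨hv, i, hi, f, hf, hx, hy⟩)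
    · refine ⟨i, by omega, f, hf, ?_, hy⟩
      have e1 : n + 1 - i = (n - i) + 1 := by omega
      rw [e1, mul_add, mul_one]
      omega
    · refine ⟨i + 1, by omega, f, hf, ?_, ?_⟩
      · have e1 : n + 1 - (i + 1) = n - i := by omega
        rw [e1]; omega
      · have e2 : v * (i + 1) = v * i + v := by ring
        rw [e2]; omega

lemma red_eq (S : Set (ℕ × ℕ)) (h1 : ∃ y, (0, y) ∈ S) (h2 : ∃ x, (x, 0) ∈ S) :
    redI S = S := by
  obtain ⟨y0, hy0⟩ := h1; obtain ⟨x0, hx0⟩ := h2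
  have hgx : gcdX S = 0 := Nat.sInf_eq_zero.mpr (Or.inl ⟨(0, y0), hy0, rfl⟩)
  have hgy : gcdY S = 0 := Nat.sInf_eq_zero.mpr (Or.inl ⟨(x0, 0), hx0, rfl⟩)
  ext m
  simp [redI, hgx, hgy]

lemma distX_eq (S : Set (ℕ × ℕ)) (a : ℕ) (hred : redI S = S)
    (hup : ∀ p ∈ S, ∀ q : ℕ × ℕ, p ≤ q → q ∈ S)
    (h0 : (a, 0) ∈ S) (hrow : ∀ x, (x, 0) ∈ S → a ≤ x) : distXI S = a := by
  have hmin : Minimal (· ∈ S) (a, 0) := by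
    refine ⟨h0, fun y hy hle => ?_⟩
    have h2 : y.2 = 0 := Nat.le_zero.mp hle.2
    have h1 : a ≤ y.1 := by
      apply hrow y.1
      have : (y.1, (0:ℕ)) = y := by rw [← h2]
      rw [this]; exact hy
    exact ⟨h1, by omega⟩
  have hub : ∀ m, Minimal (· ∈ S) m → m.1 ≤ a := by
    intro m hm
    by_contra hgt
    push_neg at hgt
    have hmem : (a, m.2) ∈ S := hup _ h0 _ ⟨le_rfl, Nat.zero_le _⟩
    have := (hm.2 hmem ⟨le_of_lt hgt, le_rfl⟩).1
    omega
  unfold distXI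
  rw [hred]
  apply le_antisymm
  · exact csSup_le ⟨a, ⟨(a, 0), hmin, rfl⟩⟩ (by rintro n ⟨m, hm, rfl⟩; exact hub m hm)
  · exact le_csSup ⟨a, by rintro n ⟨m, hm, rfl⟩; exact hub m hm⟩ ⟨(a, 0), hmin, rfl⟩

lemma distY_eq (S : Set (ℕ × ℕ)) (b : ℕ) (hred : redI S = S)
    (hup : ∀ p ∈ S, ∀ q : ℕ × ℕ, p ≤ q → q ∈ S)
    (h0 : (0, b) ∈ S) (hcol : ∀ y, (0, y) ∈ S → b ≤ y) : distYI S = b := by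
  have hmin : Minimal (· ∈ S) (0, b) := by
    refine ⟨h0, fun y hy hle => ?_⟩
    have h1 : y.1 = 0 := Nat.le_zero.mp hle.1
    have h2 : b ≤ y.2 := by
      apply hcol y.2
      have : ((0:ℕ), y.2) = y := by rw [← h1]
      rw [this]; exact hy
    exact ⟨by omega, h2⟩
  have hub : ∀ m, Minimal (· ∈ S) m → m.2 ≤ b := by
    intro m hm
    by_contra hgt
    push_neg at hgt
    have hmem : (m.1, b) ∈ S := hup _ h0 _ ⟨Nat.zero_le _, le_rfl⟩
    have := (hm.2 hmem ⟨le_rfl, le_of_lt hgt⟩).2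
    omega
  unfold distYI
  rw [hred]
  apply le_antisymm
  · exact csSup_le ⟨b, ⟨(0, b), hmin, rfl⟩⟩ (by rintro n ⟨m, hm, rfl⟩; exact hub m hm)
  · exact le_csSup ⟨b, by rintro n ⟨m, hm, rfl⟩; exact hub m hm⟩ ⟨(0, b), hmin, rfl⟩

/-- Explicit description of `H^{⊙ℓ} ⊙ B` in the one-segment situation. -/
def U (G : Finset (ℕ × ℕ)) (u v r α β ℓ : ℕ) : Set (ℕ × ℕ) :=
  {m | (ℓ * u ≤ m.1 ∧ (m.1 - ℓ * u + α, m.2) ∈ powJ G u v (r + 1)) ∨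
    ∃ j < ℓ, j * u ≤ m.1 ∧ β + (ℓ - 1 - j) * v ≤ m.2 ∧
      (m.1 - j * u + (α - u), m.2 - (ℓ - 1 - j) * v) ∈ powJ G u v (r + 1)}

end OSLaux

open OSLaux in
/-- Corollary one-segment-link: `u, v > 0`, `J` anchored with
minimal generating set `G`, `r` with `dist_y(J) ≤ r·v`.  Let `g = x^α y^β` be the
minimal generator of `(x^u,y^v)^{r+1} J` of smallest y-degree `≥ rv`, and let
`A = ((x^u,y^v)^{r+1}J) : y^β`, `H = ((x^u,y^v)^{r+1}J) : x^{α−u} y^β`,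
`B = ((x^u,y^v)^{r+1}J) : x^α` be the `r`-segments.  Then for all `ℓ ≥ 0`,
`(x^u,y^v)^{r+1+ℓ} J = A ⊙ H^{⊙ℓ} ⊙ B`. -/
theorem one_segment_link (u v : ℕ) (hu : 0 < u) (hv : 0 < v)
    (G : Finset (ℕ × ℕ)) (hne : G.Nonempty)
    (hanch : (∃ f ∈ G, f.1 = 0) ∧ (∃ f ∈ G, f.2 = 0))
    (hmin : ∀ p ∈ G, ∀ q ∈ G, p ≤ q → p = q)
    (r : ℕ) (hr : ∀ f ∈ G, f.2 ≤ r * v)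
    (α β : ℕ)
    (hgen : (α, β) ∈ powJ G u v (r + 1))
    (hgenmin : ∀ m ∈ powJ G u v (r + 1), m ≤ (α, β) → m = (α, β))
    (hβ : r * v ≤ β)
    (hβmin : ∀ m ∈ powJ G u v (r + 1),
      (∀ m' ∈ powJ G u v (r + 1), m' ≤ m → m' = m) → r * v ≤ m.2 → β ≤ m.2) :
    ∀ ℓ : ℕ,
      powJ G u v (r + 1 + ℓ) =
        link (colonM (powJ G u v (r + 1)) (0, β))
          (hTail (colonM (powJ G u v (r + 1)) (α - u, β))
            (colonM (powJ G u v (r + 1)) (α, 0)) ℓ) := by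
  have hc2 : r * v = v * r := mul_comm r v
  have Pup : ∀ p q : ℕ × ℕ, p ∈ powJ G u v (r + 1) → p.1 ≤ q.1 → p.2 ≤ q.2 →
      q ∈ powJ G u v (r + 1) := fun p q hp h1 h2 => powJ_mono hp h1 h2
  have cornerLe : ∀ m ∈ powJ G u v (r + 1), ∃ e, e ∈ powJ G u v (r + 1) ∧ e ≤ m ∧
      Minimal (· ∈ powJ G u v (r + 1)) e :=
    fun m hm => exists_minimal_le _ (m.1 + m.2) m le_rfl hm
  have decompMin : ∀ e, Minimal (· ∈ powJ G u v (r + 1)) e →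
      ∃ i ≤ r + 1, ∃ f ∈ G, e.1 = u * (r + 1 - i) + f.1 ∧ e.2 = v * i + f.2 := by
    intro e he
    obtain ⟨i, hi, f, hf, hx, hy⟩ := he.1
    have hg := genMem (G := G) (u := u) (v := v) hi hf
    have hle := he.2 hg ⟨hx, hy⟩
    exact ⟨i, hi, f, hf, le_antisymm hle.1 hx, le_antisymm hle.2 hy⟩
  have habMin : Minimal (· ∈ powJ G u v (r + 1)) (α, β) :=
    ⟨hgen, fun y hy hle => le_of_eq (hgenmin y hy hle).symm⟩
  have L2 : ∀ e, Minimal (· ∈ powJ G u v (r + 1)) e → e.2 < β → α < e.1 := by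
    intro e he h
    by_contra hcon
    push_neg at hcon
    have heq := hgenmin e he.1 ⟨hcon, le_of_lt h⟩
    have : e.2 = β := by rw [heq]
    omega
  have L3 : ∀ e, Minimal (· ∈ powJ G u v (r + 1)) e → r * v ≤ e.2 → β ≤ e.2 :=
    fun e he h => hβmin e he.1 (fun m' hm' hle => le_antisymm hle (he.2 hm' hle)) h
  have lowx : ∀ p ∈ powJ G u v (r + 1), p.1 ≤ α → β ≤ p.2 := by
    intro p hp hpa
    obtain ⟨e, heP, hele, hemin⟩ := cornerLe p hp
    by_cases h : e.2 < β
    · have := L2 e hemin h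
      have := hele.1
      omega
    · push_neg at h
      have := hele.2
      omega
  obtain ⟨⟨fd, hfd, hfd1⟩, ⟨fc, hfc, hfc2⟩⟩ := hanch
  -- β is less than r*v + v
  have C1 : β < r * v + v := by
    have hw : (u + fc.1, r * v) ∈ powJ G u v (r + 1) := by
      have h := genMem (G := G) (u := u) (v := v) (show r ≤ r + 1 by omega) hfc
      have e1 : u * (r + 1 - r) + fc.1 = u + fc.1 := by
        rw [show r + 1 - r = 1 from by omega, mul_one]
      have e2 : v * r + fc.2 = r * v := by omega
      rw [e1, e2] at h
      exact h
    set xs := sInf {x | (x, r * v) ∈ powJ G u v (r + 1)} with hxsdef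
    have hxs : (xs, r * v) ∈ powJ G u v (r + 1) :=
      Nat.sInf_mem (s := {x | (x, r * v) ∈ powJ G u v (r + 1)}) ⟨u + fc.1, hw⟩
    obtain ⟨e, heP, hele, hemin⟩ := cornerLe _ hxs
    by_cases h1 : r * v ≤ e.2
    · have hb := L3 e hemin h1
      have := hele.2
      omega
    · push_neg at h1
      obtain ⟨i, hi, f, hf, he1, he2⟩ := decompMin e hemin
      have hiltr : i < r := by
        by_contra hcon
        push_neg at hcon
        have := Nat.mul_le_mul_left v hcon
        omega
      have hq := genMem (G := G) (u := u) (v := v) (show i + 1 ≤ r + 1 by omega) hf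
      obtain ⟨e', he'P, he'le, he'min⟩ := cornerLe _ hq
      have e5 : u * (r + 1 - i) = u * (r + 1 - (i + 1)) + u := by
        rw [show r + 1 - i = (r + 1 - (i + 1)) + 1 from by omega, mul_add, mul_one]
      have e6 : v * (i + 1) = v * i + v := by ring
      by_cases h2 : r * v ≤ e'.2
      · have hb := L3 e' he'min h2
        have := he'le.2
        omega
      · push_neg at h2
        have hm2 : (e'.1, r * v) ∈ powJ G u v (r + 1) := Pup _ _ he'P le_rfl (by omega)
        have hgex : xs ≤ e'.1 := Nat.sInf_le hm2
        have h7 := he'le.1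
        have h8 := hele.1
        omega
  obtain ⟨i₀, hi₀, f₀, hf₀, hA0, hB0⟩ := decompMin (α, β) habMin
  have hA0' : α = u * (r + 1 - i₀) + f₀.1 := hA0
  have hB0' : β = v * i₀ + f₀.2 := hB0
  have hi₀r : i₀ ≤ r := by
    by_contra hcon
    push_neg at hcon
    have hieq : i₀ = r + 1 := by omega
    rw [hieq] at hB0'
    have e6 : v * (r + 1) = v * r + v := by ring
    omega
  have hαu : u ≤ α := by
    have h1 : u ≤ u * (r + 1 - i₀) := Nat.le_mul_of_pos_right u (by omega)
    omega
  have F1 : (α - u, β + v) ∈ powJ G u v (r + 1) := by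
    have h := genMem (G := G) (u := u) (v := v) (show i₀ + 1 ≤ r + 1 by omega) hf₀
    have e5 : u * (r + 1 - i₀) = u * (r + 1 - (i₀ + 1)) + u := by
      rw [show r + 1 - i₀ = (r + 1 - (i₀ + 1)) + 1 from by omega, mul_add, mul_one]
    have e6 : v * (i₀ + 1) = v * i₀ + v := by ring
    have e1 : u * (r + 1 - (i₀ + 1)) + f₀.1 = α - u := by omega
    have e2 : v * (i₀ + 1) + f₀.2 = β + v := by omega
    rw [e1, e2] at h
    exact h
  have F2 : (α - u, β + v - 1) ∉ powJ G u v (r + 1) := by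
    intro hmem
    obtain ⟨e, heP, hele, hemin⟩ := cornerLe _ hmem
    have he1 : e.1 ≤ α - u := hele.1
    have he2 : e.2 ≤ β + v - 1 := hele.2
    have hbe : β ≤ e.2 := by
      by_contra hcon
      push_neg at hcon
      have := L2 e hemin hcon
      omega
    by_cases heq : e.2 = β
    · have hEq := hgenmin e heP ⟨by omega, by omega⟩
      have : e.1 = α := by rw [hEq]
      omega
    · obtain ⟨i, hi, f, hf, he1', he2'⟩ := decompMin e hemin
      have hi1 : 1 ≤ i := by
        by_contra hcon
        push_neg at hcon
        have hieq : i = 0 := by omega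
        rw [hieq, mul_zero, zero_add] at he2'
        have := hr f hf
        omega
      obtain ⟨i', rfl⟩ : ∃ i', i = i' + 1 := ⟨i - 1, by omega⟩
      have hg := genMem (G := G) (u := u) (v := v) (show i' ≤ r + 1 by omega) hf
      have e5 : u * (r + 1 - i') = u * (r + 1 - (i' + 1)) + u := by
        rw [show r + 1 - i' = (r + 1 - (i' + 1)) + 1 from by omega, mul_add, mul_one]
      have e6 : v * (i' + 1) = v * i' + v := by ring
      have ex : u * (r + 1 - i') + f.1 = e.1 + u := by omega
      have ey : v * i' + f.2 = e.2 - v := by omega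
      rw [ex, ey] at hg
      obtain ⟨e'', he''P, he''le, he''min⟩ := cornerLe _ hg
      have hL := L2 e'' he''min (show e''.2 < β by
        have := he''le.2
        omega)
      have := he''le.1
      omega
  have W : ∀ p ∈ powJ G u v (r + 1), α ≤ p.1 →
      (p.1 - u, p.2 + v) ∈ powJ G u v (r + 1) := by
    intro p hp hap
    obtain ⟨e, heP, hele, hemin⟩ := cornerLe _ hp
    obtain ⟨i, hi, f, hf, he1, he2⟩ := decompMin e hemin
    by_cases hir : i ≤ r
    · have hg := genMem (G := G) (u := u) (v := v) (show i + 1 ≤ r + 1 by omega) hf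
      refine Pup _ _ hg ?_ ?_
      · have e5 : u * (r + 1 - i) = u * (r + 1 - (i + 1)) + u := by
          rw [show r + 1 - i = (r + 1 - (i + 1)) + 1 from by omega, mul_add, mul_one]
        have := hele.1
        simp only
        omega
      · have e6 : v * (i + 1) = v * i + v := by ring
        have := hele.2
        simp only
        omega
    · have hieq : i = r + 1 := by omega
      rw [hieq] at he2
      have e6 : v * (r + 1) = v * r + v := by ring
      have hpb : β ≤ p.2 := by
        have := hele.2
        omega
      exact Pup _ _ F1 (by simp only; omega) (by simp only; omega)
  have W2 : ∀ p ∈ powJ G u v (r + 1), β + v ≤ p.2 →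
      (p.1 + u, p.2 - v) ∈ powJ G u v (r + 1) := by
    intro p hp hbp
    obtain ⟨e, heP, hele, hemin⟩ := cornerLe _ hp
    obtain ⟨i, hi, f, hf, he1, he2⟩ := decompMin e hemin
    by_cases hi1 : 1 ≤ i
    · obtain ⟨i', rfl⟩ : ∃ i', i = i' + 1 := ⟨i - 1, by omega⟩
      have hg := genMem (G := G) (u := u) (v := v) (show i' ≤ r + 1 by omega) hf
      refine Pup _ _ hg ?_ ?_
      · have e5 : u * (r + 1 - i') = u * (r + 1 - (i' + 1)) + u := by
          rw [show r + 1 - i' = (r + 1 - (i' + 1)) + 1 from by omega, mul_add, mul_one]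
        have := hele.1
        simp only
        omega
      · have e6 : v * (i' + 1) = v * i' + v := by ring
        have := hele.2
        simp only
        omega
    · have hieq : i = 0 := by omega
      rw [hieq, mul_zero, zero_add] at he2
      have hf2 := hr f hf
      refine Pup _ _ heP ?_ ?_
      · have := hele.1
        simp only
        omega
      · have := hele.2
        simp only
        omega
  have base : ∀ m ∈ powJ G u v (r + 1), β ≤ m.2 ∨ α ≤ m.1 := by
    intro m hm
    obtain ⟨e, heP, hele, hemin⟩ := cornerLe _ hm
    by_cases h : e.2 < β
    · have := L2 e hemin h
      have := hele.1
      right; omega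
    · push_neg at h
      have := hele.2
      left; omega
  have MAIN : ∀ ℓ (m : ℕ × ℕ), m ∈ powJ G u v (r + 1 + ℓ) ↔
      (β + ℓ * v ≤ m.2 ∧ (m.1, m.2 - ℓ * v) ∈ powJ G u v (r + 1)) ∨
      (α + ℓ * u ≤ m.1 ∧ (m.1 - ℓ * u, m.2) ∈ powJ G u v (r + 1)) ∨
      (∃ j < ℓ, α + j * u ≤ m.1 ∧ β + (ℓ - 1 - j) * v ≤ m.2 ∧
        (m.1 - j * u - u, m.2 - (ℓ - 1 - j) * v) ∈ powJ G u v (r + 1)) := by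
    intro ℓ
    induction ℓ with
    | zero =>
      intro m
      constructor
      · intro hm
        rcases base m hm with h | h
        · exact Or.inl ⟨by omega, Pup _ _ hm (by omega) (by omega)⟩
        · exact Or.inr (Or.inl ⟨by omega, Pup _ _ hm (by omega) (by omega)⟩)
      · rintro (⟨h1, h2⟩ | ⟨h1, h2⟩ | ⟨j, hj, _⟩)
        · exact Pup _ _ h2 (by omega) (by omega)
        · exact Pup _ _ h2 (by omega) (by omega)
        · omega
    | succ ℓ ih =>
      intro m
      have ev : (ℓ + 1) * v = ℓ * v + v := by ring
      have eu : (ℓ + 1) * u = ℓ * u + u := by ring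
      rw [show r + 1 + (ℓ + 1) = (r + 1 + ℓ) + 1 from by omega, powJ_succ]
      simp only [Nat.add_sub_cancel]
      constructor
      · rintro (⟨hxu, hm'⟩ | ⟨hyv, hm'⟩)
        · rcases (ih (m.1 - u, m.2)).1 hm' with ⟨h1, h2⟩ | ⟨h1, h2⟩ | ⟨j, hj, h1, h2, h3⟩
          · -- piece 1 shifted in x
            by_cases hα1 : α ≤ m.1
            · have hb0 : (ℓ - 0) * v = ℓ * v := by rw [Nat.sub_zero]
              exact Or.inr (Or.inr ⟨0, by omega, by omega, by omega,
                Pup _ _ h2 (by omega) (by omega)⟩)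
            · push_neg at hα1
              have hP2 : β + v ≤ m.2 - ℓ * v := by
                by_contra hlt
                push_neg at hlt
                exact F2 (Pup _ _ h2 (by omega) (by omega))
              have hW2 := W2 _ h2 (by omega)
              exact Or.inl ⟨by omega, Pup _ _ hW2 (by omega) (by omega)⟩
          · exact Or.inr (Or.inl ⟨by omega, Pup _ _ h2 (by omega) (by omega)⟩)
          · have ej : (j + 1) * u = j * u + u := by ring
            have hbj : (ℓ - (j + 1)) * v = (ℓ - 1 - j) * v := by
              rw [show ℓ - (j + 1) = ℓ - 1 - j from by omega]
            exact Or.inr (Or.inr ⟨j + 1, by omega, by omega, by omega,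
              Pup _ _ h3 (by omega) (by omega)⟩)
        · rcases (ih (m.1, m.2 - v)).1 hm' with ⟨h1, h2⟩ | ⟨h1, h2⟩ | ⟨j, hj, h1, h2, h3⟩
          · exact Or.inl ⟨by omega, Pup _ _ h2 (by omega) (by omega)⟩
          · have hW := W _ h2 (by omega)
            by_cases hx : α + ℓ * u + u ≤ m.1
            · exact Or.inr (Or.inl ⟨by omega, Pup _ _ hW (by omega) (by omega)⟩)
            · push_neg at hx
              have hq : (m.1 - ℓ * u - u, m.2) ∈ powJ G u v (r + 1) :=
                Pup _ _ hW (by omega) (by omega)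
              have hm2 := lowx _ hq (by omega)
              have hbl : (ℓ - ℓ) * v = 0 := by rw [Nat.sub_self, zero_mul]
              exact Or.inr (Or.inr ⟨ℓ, by omega, by omega, by omega,
                Pup _ _ hq (by omega) (by omega)⟩)
          · have ejv : (ℓ - j) * v = (ℓ - 1 - j) * v + v := by
              rw [show ℓ - j = (ℓ - 1 - j) + 1 from by omega, add_mul, one_mul]
            exact Or.inr (Or.inr ⟨j, by omega, by omega, by omega,
              Pup _ _ h3 (by omega) (by omega)⟩)
      · rintro (⟨h1, h2⟩ | ⟨h1, h2⟩ | ⟨j, hj, h1, h2, h3⟩)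
        · refine Or.inr ⟨by omega, (ih (m.1, m.2 - v)).2 (Or.inl ⟨by omega,
            Pup _ _ h2 (by omega) (by omega)⟩)⟩
        · refine Or.inl ⟨by omega, (ih (m.1 - u, m.2)).2 (Or.inr (Or.inl ⟨by omega,
            Pup _ _ h2 (by omega) (by omega)⟩))⟩
        · by_cases hj0 : j = 0
          · subst hj0
            have hb0 : (ℓ - 0) * v = ℓ * v := by rw [Nat.sub_zero]
            refine Or.inl ⟨by omega, (ih (m.1 - u, m.2)).2 (Or.inl ⟨by omega,
              Pup _ _ h3 (by omega) (by omega)⟩)⟩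
          · obtain ⟨j', rfl⟩ : ∃ j', j = j' + 1 := ⟨j - 1, by omega⟩
            have ej : (j' + 1) * u = j' * u + u := by ring
            have hbj : (ℓ - (j' + 1)) * v = (ℓ - 1 - j') * v := by
              rw [show ℓ - (j' + 1) = ℓ - 1 - j' from by omega]
            refine Or.inl ⟨by omega, (ih (m.1 - u, m.2)).2 (Or.inr (Or.inr
              ⟨j', by omega, by omega, by omega, Pup _ _ h3 (by omega) (by omega)⟩))⟩
  have Umem : ∀ ℓ (m : ℕ × ℕ), m ∈ U G u v r α β ℓ ↔
      ((ℓ * u ≤ m.1 ∧ (m.1 - ℓ * u + α, m.2) ∈ powJ G u v (r + 1)) ∨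
        ∃ j < ℓ, j * u ≤ m.1 ∧ β + (ℓ - 1 - j) * v ≤ m.2 ∧
          (m.1 - j * u + (α - u), m.2 - (ℓ - 1 - j) * v) ∈ powJ G u v (r + 1)) :=
    fun _ _ => Iff.rfl
  have memA : ∀ m : ℕ × ℕ, m ∈ colonM (powJ G u v (r + 1)) (0, β) ↔
      (m.1 + 0, m.2 + β) ∈ powJ G u v (r + 1) := fun _ => Iff.rfl
  have memH : ∀ m : ℕ × ℕ, m ∈ colonM (powJ G u v (r + 1)) (α - u, β) ↔
      (m.1 + (α - u), m.2 + β) ∈ powJ G u v (r + 1) := fun _ => Iff.rfl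
  have memB : ∀ m : ℕ × ℕ, m ∈ colonM (powJ G u v (r + 1)) (α, 0) ↔
      (m.1 + α, m.2 + 0) ∈ powJ G u v (r + 1) := fun _ => Iff.rfl
  have Uup : ∀ ℓ, ∀ p ∈ U G u v r α β ℓ, ∀ q : ℕ × ℕ, p ≤ q → q ∈ U G u v r α β ℓ := by
    intro ℓ p hp q hpq
    obtain ⟨hq1, hq2⟩ := hpq
    rcases (Umem ℓ p).1 hp with ⟨h1, h2⟩ | ⟨j, hj, h1, h2, h3⟩
    · exact (Umem ℓ q).2 (Or.inl ⟨by omega, Pup _ _ h2 (by omega) (by omega)⟩)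
    · exact (Umem ℓ q).2 (Or.inr ⟨j, hj, by omega, by omega,
        Pup _ _ h3 (by omega) (by omega)⟩)
  have U0y : ∀ ℓ, ((0 : ℕ), β + ℓ * v) ∈ U G u v r α β ℓ := by
    intro ℓ
    cases ℓ with
    | zero => exact (Umem 0 _).2 (Or.inl ⟨by omega, Pup _ _ hgen (by omega) (by omega)⟩)
    | succ n =>
      have en : (n + 1) * v = n * v + v := by ring
      have hb : (n + 1 - 1 - 0) * v = n * v := by
        rw [show n + 1 - 1 - 0 = n from by omega]
      exact (Umem (n + 1) _).2 (Or.inr ⟨0, by omega, by omega, by omega,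
        Pup _ _ F1 (by omega) (by omega)⟩)
  have colU : ∀ ℓ y, ((0 : ℕ), y) ∈ U G u v r α β ℓ → β + ℓ * v ≤ y := by
    intro ℓ y hy
    rcases (Umem ℓ _).1 hy with ⟨h1, h2⟩ | ⟨j, hj, h1, h2, h3⟩
    · have hl0 : ℓ = 0 := by
        by_contra hcon
        have : u ≤ ℓ * u := Nat.le_mul_of_pos_left u (by omega)
        omega
      subst hl0
      have := lowx _ h2 (by omega)
      omega
    · have hj0 : j = 0 := by
        by_contra hcon
        have : u ≤ j * u := Nat.le_mul_of_pos_left u (by omega)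
        omega
      subst hj0
      obtain ⟨n, rfl⟩ : ∃ n, ℓ = n + 1 := ⟨ℓ - 1, by omega⟩
      have en : (n + 1) * v = n * v + v := by ring
      have hb : (n + 1 - 1 - 0) * v = n * v := by
        rw [show n + 1 - 1 - 0 = n from by omega]
      have hstep : β + v ≤ y - n * v := by
        by_contra hlt
        push_neg at hlt
        exact F2 (Pup _ _ h3 (by omega) (by omega))
      omega
  have Ux0 : ∀ ℓ, ∃ x, ((x : ℕ), (0 : ℕ)) ∈ U G u v r α β ℓ := by
    intro ℓ
    refine ⟨ℓ * u + (u * (r + 1) + fc.1 + α), ?_⟩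
    have hg := genMem (G := G) (u := u) (v := v) (show 0 ≤ r + 1 by omega) hfc
    have hb : u * (r + 1 - 0) = u * (r + 1) := by rw [Nat.sub_zero]
    exact (Umem ℓ _).2 (Or.inl ⟨by omega, Pup _ _ hg (by omega) (by omega)⟩)
  have redU : ∀ ℓ, redI (U G u v r α β ℓ) = U G u v r α β ℓ :=
    fun ℓ => red_eq _ ⟨β + ℓ * v, U0y ℓ⟩ (Ux0 ℓ)
  have dYU : ∀ ℓ, distYI (U G u v r α β ℓ) = β + ℓ * v :=
    fun ℓ => distY_eq _ _ (redU ℓ) (Uup ℓ) (U0y ℓ) (colU ℓ)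
  have hDcol : ((0 : ℕ), v * (r + 1) + fd.2) ∈ powJ G u v (r + 1) := by
    have hg := genMem (G := G) (u := u) (v := v) (show r + 1 ≤ r + 1 by omega) hfd
    have hb : u * (r + 1 - (r + 1)) = 0 := by rw [Nat.sub_self, mul_zero]
    exact Pup _ _ hg (by omega) (by omega)
  have redA : redI (colonM (powJ G u v (r + 1)) (0, β)) = colonM (powJ G u v (r + 1)) (0, β) := by
    refine red_eq _ ⟨v * (r + 1) + fd.2, ?_⟩ ⟨α, ?_⟩
    · exact (memA _).2 (Pup _ _ hDcol (by omega) (by omega))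
    · exact (memA _).2 (Pup _ _ hgen (by omega) (by omega))
  have Aup : ∀ p ∈ colonM (powJ G u v (r + 1)) (0, β), ∀ q : ℕ × ℕ, p ≤ q →
      q ∈ colonM (powJ G u v (r + 1)) (0, β) := by
    intro p hp q hpq
    obtain ⟨h1, h2⟩ := hpq
    exact (memA _).2 (Pup _ _ ((memA _).1 hp) (by omega) (by omega))
  have dXA : distXI (colonM (powJ G u v (r + 1)) (0, β)) = α := by
    refine distX_eq _ _ redA Aup ?_ ?_
    · exact (memA _).2 (Pup _ _ hgen (by omega) (by omega))
    · intro x hx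
      by_contra hcon
      push_neg at hcon
      have heq := hgenmin _ ((memA _).1 hx) ⟨by omega, by omega⟩
      have h5 := congrArg Prod.fst heq
      simp only at h5
      omega
  have redH : redI (colonM (powJ G u v (r + 1)) (α - u, β)) =
      colonM (powJ G u v (r + 1)) (α - u, β) := by
    refine red_eq _ ⟨v * (r + 1) + fd.2, ?_⟩ ⟨u, ?_⟩
    · exact (memH _).2 (Pup _ _ hDcol (by omega) (by omega))
    · exact (memH _).2 (Pup _ _ hgen (by omega) (by omega))
  have Hup : ∀ p ∈ colonM (powJ G u v (r + 1)) (α - u, β), ∀ q : ℕ × ℕ, p ≤ q →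
      q ∈ colonM (powJ G u v (r + 1)) (α - u, β) := by
    intro p hp q hpq
    obtain ⟨h1, h2⟩ := hpq
    exact (memH _).2 (Pup _ _ ((memH _).1 hp) (by omega) (by omega))
  have dXH : distXI (colonM (powJ G u v (r + 1)) (α - u, β)) = u := by
    refine distX_eq _ _ redH Hup ?_ ?_
    · exact (memH _).2 (Pup _ _ hgen (by omega) (by omega))
    · intro x hx
      by_contra hcon
      push_neg at hcon
      have heq := hgenmin _ ((memH _).1 hx) ⟨by omega, by omega⟩
      have h5 := congrArg Prod.fst heq
      simp only at h5
      omega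
  have hTailU : ∀ ℓ, hTail (colonM (powJ G u v (r + 1)) (α - u, β))
      (colonM (powJ G u v (r + 1)) (α, 0)) ℓ = U G u v r α β ℓ := by
    intro ℓ
    induction ℓ with
    | zero =>
      ext m
      simp only [hTail]
      constructor
      · intro hm
        exact (Umem 0 _).2 (Or.inl ⟨by omega, Pup _ _ ((memB _).1 hm) (by omega) (by omega)⟩)
      · intro hm
        rcases (Umem 0 _).1 hm with ⟨h1, h2⟩ | ⟨j, hj, _⟩
        · exact (memB _).2 (Pup _ _ h2 (by omega) (by omega))
        · omega
    | succ n ih =>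
      simp only [hTail]
      rw [ih]
      unfold link
      rw [redH, redU, dYU, dXH]
      ext m
      simp only [Set.mem_union, Set.mem_setOf_eq]
      constructor
      · rintro (⟨h1, h2⟩ | ⟨h1, h2⟩)
        · have h2' := (memH _).1 h2
          have hb : (n + 1 - 1 - 0) * v = n * v := by
            rw [show n + 1 - 1 - 0 = n from by omega]
          exact (Umem (n + 1) _).2 (Or.inr ⟨0, by omega, by omega, by omega,
            Pup _ _ h2' (by omega) (by omega)⟩)
        · rcases (Umem n _).1 h2 with ⟨g1, g2⟩ | ⟨j, hj, g1, g2, g3⟩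
          · have eb : (n + 1) * u = n * u + u := by ring
            exact (Umem (n + 1) _).2 (Or.inl ⟨by omega, Pup _ _ g2 (by omega) (by omega)⟩)
          · have eb : (j + 1) * u = j * u + u := by ring
            have hb : (n + 1 - 1 - (j + 1)) * v = (n - 1 - j) * v := by
              rw [show n + 1 - 1 - (j + 1) = n - 1 - j from by omega]
            exact (Umem (n + 1) _).2 (Or.inr ⟨j + 1, by omega, by omega, by omega,
              Pup _ _ g3 (by omega) (by omega)⟩)
      · intro hm
        rcases (Umem (n + 1) _).1 hm with ⟨h1, h2⟩ | ⟨j, hj, h1, h2, h3⟩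
        · right
          have eb : (n + 1) * u = n * u + u := by ring
          exact ⟨by omega, (Umem n _).2 (Or.inl ⟨by omega, Pup _ _ h2 (by omega) (by omega)⟩)⟩
        · by_cases hj0 : j = 0
          · subst hj0
            left
            have hb : (n + 1 - 1 - 0) * v = n * v := by
              rw [show n + 1 - 1 - 0 = n from by omega]
            exact ⟨by omega, (memH _).2 (Pup _ _ h3 (by omega) (by omega))⟩
          · obtain ⟨j', rfl⟩ : ∃ j', j = j' + 1 := ⟨j - 1, by omega⟩
            right
            have eb : (j' + 1) * u = j' * u + u := by ring
            have hb : (n + 1 - 1 - (j' + 1)) * v = (n - 1 - j') * v := by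
              rw [show n + 1 - 1 - (j' + 1) = n - 1 - j' from by omega]
            exact ⟨by omega, (Umem n _).2 (Or.inr ⟨j', by omega, by omega, by omega,
              Pup _ _ h3 (by omega) (by omega)⟩)⟩
  intro ℓ
  rw [hTailU ℓ]
  unfold link
  rw [redA, redU, dYU, dXA]
  ext m
  simp only [Set.mem_union, Set.mem_setOf_eq]
  rw [MAIN ℓ m]
  constructor
  · rintro (⟨h1, h2⟩ | ⟨h1, h2⟩ | ⟨j, hj, h1, h2, h3⟩)
    · exact Or.inl ⟨by omega, (memA _).2 (Pup _ _ h2 (by omega) (by omega))⟩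
    · exact Or.inr ⟨by omega, (Umem ℓ _).2 (Or.inl ⟨by omega,
        Pup _ _ h2 (by omega) (by omega)⟩)⟩
    · exact Or.inr ⟨by omega, (Umem ℓ _).2 (Or.inr ⟨j, hj, by omega, by omega,
        Pup _ _ h3 (by omega) (by omega)⟩)⟩
  · rintro (⟨h1, h2⟩ | ⟨h1, h2⟩)
    · exact Or.inl ⟨by omega, Pup _ _ ((memA _).1 h2) (by omega) (by omega)⟩
    · rcases (Umem ℓ _).1 h2 with ⟨g1, g2⟩ | ⟨j, hj, g1, g2, g3⟩
      · exact Or.inr (Or.inl ⟨by omega, Pup _ _ g2 (by omega) (by omega)⟩)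
      · exact Or.inr (Or.inr ⟨j, hj, by omega, by omega,
          Pup _ _ g3 (by omega) (by omega)⟩)
end

section
/- Let I be a monomial ideal in k[x,y] and let P with P(I) ⊆ P ⊆ P*(I) be a set of generators containing all persistent generators, P = {g_1, …, g_{k+1}} ordered in descending y-degree. Let δ_P = max over 1 ≤ i ≤ k of min{dist_x(g_i,g_{i+1}), dist_y(g_i,g_{i+1})} − 1. Then for every n ≥ δ_P and every monomial f ∈ I there exist 1 ≤ i ≤ k and a ≤ δ_P such that f^n ∈ (g_i, g_{i+1})^{n−a} · (f^a). -/
/-- Membership of a monomial in the ideal generated by `G`. -/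
def memI (G : Finset (ℕ × ℕ)) (m : ℕ × ℕ) : Prop := ∃ g ∈ G, g ≤ m

/-- Membership of a monomial in the `n`-th power of the ideal generated by `G`. -/
def memNpow (G : Finset (ℕ × ℕ)) (n : ℕ) (m : ℕ × ℕ) : Prop :=
  ∃ s : Multiset (ℕ × ℕ), (∀ x ∈ s, x ∈ G) ∧ Multiset.card s = n ∧ s.sum ≤ m

/-- `f` lies in the integral closure of `(g, h)`: some power `f^n ∈ (g,h)^n`. -/
def inIC (g h f : ℕ × ℕ) : Prop :=
  ∃ n : ℕ, 0 < n ∧ ∃ k : ℕ, k ≤ n ∧ k • g + (n - k) • h ≤ n • f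

/-- `f` is a persistent generator of the ideal with minimal generating set `G`. -/
def persistent (G : Finset (ℕ × ℕ)) (f : ℕ × ℕ) : Prop :=
  f ∈ G ∧ ∀ g h : ℕ × ℕ, memI G g → memI G h → g ≠ f → h ≠ f → ¬ inIC g h f

/-- `f` is a weakly persistent generator: `f^n` is a minimal generator of `I^n`
for all `n ≥ 1`. -/
def weaklyPersistent (G : Finset (ℕ × ℕ)) (f : ℕ × ℕ) : Prop :=
  f ∈ G ∧ ∀ n : ℕ, 0 < n →
    memNpow G n (n • f) ∧ ∀ m, memNpow G n m → m ≤ n • f → m = n • f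

/-- x-distance of two monomials. -/
def dX (p q : ℕ × ℕ) : ℕ := max p.1 q.1 - min p.1 q.1

/-- y-distance of two monomials. -/
def dY (p q : ℕ × ℕ) : ℕ := max p.2 q.2 - min p.2 q.2


section NMGhelpers

private lemma NMG_pair_eq {a b x y x' y' : ℕ} (ha : 0 < a) (hb : 0 < b)
    (hx : x ≤ x') (hy : y ≤ y') (he : a * x' + b * y' ≤ a * x + b * y) :
    x' = x ∧ y' = y := by
  have h1 : a * x ≤ a * x' := Nat.mul_le_mul_left a hx
  have h2 : b * y ≤ b * y' := Nat.mul_le_mul_left b hy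
  have e1 : a * x' = a * x := by omega
  have e2 : b * y' = b * y := by omega
  exact ⟨Nat.eq_of_mul_eq_mul_left ha e1, Nat.eq_of_mul_eq_mul_left hb e2⟩

private lemma NMG_build_x (X e β γ : ℕ) :
    (e*β) * X + (e*γ) * (X + (β+γ)) ≤ ((β+γ)*e) * (X + γ) := le_of_eq (by ring)

private lemma NMG_build_y (Q Ai e β γ α : ℕ) (hkey : Ai * β ≤ (β+γ) * α) :
    (e*β) * (Q + Ai) + (e*γ) * Q ≤ ((β+γ)*e) * (Q + α) := by
  nlinarith [Nat.mul_le_mul_left e hkey]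

private lemma NMG_chain (k : ℕ) (A B : ℕ → ℕ) (hB : ∀ j, j < k → 0 < B j)
    (hstep : ∀ j, j + 1 < k → A (j+1) * B j ≤ A j * B (j+1)) :
    ∀ i j, i ≤ j → j < k → A j * B i ≤ A i * B j := by
  intro i j hij hjk
  induction j, hij using Nat.le_induction with
  | base => exact le_refl _
  | succ j hij ih =>
    have hjk' : j < k := by omega
    have h1 := ih hjk'
    have h2 := hstep j (by omega)
    have key : A (j+1) * B i * B j ≤ A i * B (j+1) * B j := by
      calc A (j+1) * B i * B j = (A (j+1) * B j) * B i := by ring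
        _ ≤ (A j * B (j+1)) * B i := Nat.mul_le_mul_right _ h2
        _ = (A j * B i) * B (j+1) := by ring
        _ ≤ (A i * B j) * B (j+1) := Nat.mul_le_mul_right _ h1
        _ = A i * B (j+1) * B j := by ring
    exact Nat.le_of_mul_le_mul_right key (hB j hjk')

private lemma NMG_edge_bound (k : ℕ) (P : ℕ → ℕ × ℕ) (A B : ℕ → ℕ)
    (hBx : ∀ j, j < k → (P (j+1)).1 = (P j).1 + B j)
    (hAy : ∀ j, j < k → (P j).2 = (P (j+1)).2 + A j)
    (hB : ∀ j, j < k → 0 < B j)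
    (hstep : ∀ j, j + 1 < k → A (j+1) * B j ≤ A j * B (j+1)) :
    ∀ i, i < k → ∀ j, j ≤ k →
      A i * (P i).1 + B i * (P i).2 ≤ A i * (P j).1 + B i * (P j).2 := by
  intro i hik
  have hch := NMG_chain k A B hB hstep
  have up : ∀ j, i ≤ j → j ≤ k →
      A i * (P i).1 + B i * (P i).2 ≤ A i * (P j).1 + B i * (P j).2 := by
    intro j hij hjk
    induction j, hij using Nat.le_induction with
    | base => exact le_refl _
    | succ j hij ih =>
      have hjk' : j < k := by omega
      have h1 := ih (by omega)
      have e1 : A i * (P (j+1)).1 = A i * (P j).1 + A i * B j := by rw [hBx j hjk']; ring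
      have e2 : B i * (P j).2 = B i * (P (j+1)).2 + B i * A j := by rw [hAy j hjk']; ring
      have h2 : A j * B i ≤ A i * B j := hch i j hij hjk'
      have e3 : B i * A j = A j * B i := Nat.mul_comm _ _
      omega
  have down : ∀ d j, j + d = i →
      A i * (P i).1 + B i * (P i).2 ≤ A i * (P j).1 + B i * (P j).2 := by
    intro d
    induction d with
    | zero =>
      intro j hj
      obtain rfl : j = i := by omega
      exact le_refl _
    | succ d ih =>
      intro j hj
      have h1 := ih (j+1) (by omega)
      have hjk' : j < k := by omega
      have hji : j ≤ i := by omega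
      have e1 : A i * (P (j+1)).1 = A i * (P j).1 + A i * B j := by rw [hBx j hjk']; ring
      have e2 : B i * (P j).2 = B i * (P (j+1)).2 + B i * A j := by rw [hAy j hjk']; ring
      have h2 : A i * B j ≤ A j * B i := hch j i hji hik
      have e3 : B i * A j = A j * B i := Nat.mul_comm _ _
      omega
  intro j hjk
  rcases le_or_gt i j with h | h
  · exact up j h hjk
  · exact down (i - j) j (by omega)

private lemma NMG_mkle {a b : ℕ×ℕ} (h1 : a.1 ≤ b.1) (h2 : a.2 ≤ b.2) : a ≤ b :=
  Prod.le_def.mpr ⟨h1, h2⟩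

private lemma NMG_comps {c n : ℕ} {u v w : ℕ × ℕ} (hle : c • u + (n - c) • v ≤ n • w) :
    c * u.1 + (n-c) * v.1 ≤ n * w.1 ∧ c * u.2 + (n-c) * v.2 ≤ n * w.2 := by
  obtain ⟨h1, h2⟩ := Prod.le_def.mp hle
  simp only [Prod.fst_add, Prod.snd_add, Prod.smul_fst, Prod.smul_snd, smul_eq_mul] at h1 h2
  exact ⟨h1, h2⟩

private lemma NMG_persistent_min_snd (G : Finset (ℕ × ℕ))
    (hmin : ∀ p ∈ G, ∀ q ∈ G, p ≤ q → p = q)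
    (w : ℕ × ℕ) (hw : w ∈ G) (hws : ∀ h ∈ G, w.2 ≤ h.2) :
    persistent G w := by
  refine ⟨hw, ?_⟩
  rintro u v ⟨h1, h1G, h1u⟩ ⟨h2, h2G, h2v⟩ hune hvne ⟨n, hn, c, hcn, hle⟩
  obtain ⟨hle1, hle2⟩ := NMG_comps hle
  set d := n - c with hd
  have huniq : ∀ h ∈ G, h.2 = w.2 → h = w := by
    intro h hG he
    rcases le_total h.1 w.1 with hc | hc
    · exact hmin h hG w hw (NMG_mkle hc (le_of_eq he))
    · exact (hmin w hw h hG (NMG_mkle hc (le_of_eq he.symm))).symm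
  rcases Nat.eq_zero_or_pos c with rfl | hc
  · simp only [Nat.zero_mul, Nat.zero_add, Nat.sub_zero] at hle1 hle2
    have hv1 : v.1 ≤ w.1 := Nat.le_of_mul_le_mul_left hle1 hn
    have hv2 : v.2 ≤ w.2 := Nat.le_of_mul_le_mul_left hle2 hn
    have hh2 : h2 = w := hmin h2 h2G w hw (le_trans h2v (NMG_mkle hv1 hv2))
    exact hvne (le_antisymm (NMG_mkle hv1 hv2) (hh2 ▸ h2v))
  rcases Nat.eq_zero_or_pos d with hd0 | hdpos
  · have hcn' : c = n := by omega
    rw [hd0] at hle1 hle2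
    rw [hcn'] at hle1 hle2
    simp only [Nat.zero_mul, Nat.add_zero] at hle1 hle2
    have hu1 : u.1 ≤ w.1 := Nat.le_of_mul_le_mul_left hle1 hn
    have hu2 : u.2 ≤ w.2 := Nat.le_of_mul_le_mul_left hle2 hn
    have hh1 : h1 = w := hmin h1 h1G w hw (le_trans h1u (NMG_mkle hu1 hu2))
    exact hune (le_antisymm (NMG_mkle hu1 hu2) (hh1 ▸ h1u))
  have hw2u : w.2 ≤ u.2 := le_trans (hws h1 h1G) h1u.2
  have hw2v : w.2 ≤ v.2 := le_trans (hws h2 h2G) h2v.2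
  have k1 : c * w.2 ≤ c * u.2 := Nat.mul_le_mul_left c hw2u
  have k2 : d * w.2 ≤ d * v.2 := Nat.mul_le_mul_left d hw2v
  have hnw : n * w.2 = c * w.2 + d * w.2 := by rw [show n = c + d by omega, Nat.add_mul]
  have hu2 : u.2 = w.2 := Nat.eq_of_mul_eq_mul_left hc (by omega)
  have hv2 : v.2 = w.2 := Nat.eq_of_mul_eq_mul_left hdpos (by omega)
  have hh1 : h1 = w := huniq h1 h1G (le_antisymm (hu2 ▸ h1u.2) (hws h1 h1G))
  have hh2 : h2 = w := huniq h2 h2G (le_antisymm (hv2 ▸ h2v.2) (hws h2 h2G))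
  have hu1 : w.1 < u.1 := by
    rcases Nat.lt_or_ge w.1 u.1 with h | h
    · exact h
    · exact (hune (Prod.ext (le_antisymm (hh1 ▸ h1u.1) h).symm hu2)).elim
  have hv1 : w.1 < v.1 := by
    rcases Nat.lt_or_ge w.1 v.1 with h | h
    · exact h
    · exact (hvne (Prod.ext (le_antisymm (hh2 ▸ h2v.1) h).symm hv2)).elim
  have k3 : c * (w.1+1) ≤ c * u.1 := Nat.mul_le_mul_left c hu1
  have k4 : d * (w.1+1) ≤ d * v.1 := Nat.mul_le_mul_left d hv1
  have e1 : c * (w.1+1) = c * w.1 + c := by ring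
  have e2 : d * (w.1+1) = d * w.1 + d := by ring
  have hnw1 : n * w.1 = c * w.1 + d * w.1 := by rw [show n = c + d by omega, Nat.add_mul]
  omega

private lemma NMG_persistent_min_fst (G : Finset (ℕ × ℕ))
    (hmin : ∀ p ∈ G, ∀ q ∈ G, p ≤ q → p = q)
    (w : ℕ × ℕ) (hw : w ∈ G) (hws : ∀ h ∈ G, w.1 ≤ h.1) :
    persistent G w := by
  refine ⟨hw, ?_⟩
  rintro u v ⟨h1, h1G, h1u⟩ ⟨h2, h2G, h2v⟩ hune hvne ⟨n, hn, c, hcn, hle⟩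
  obtain ⟨hle1, hle2⟩ := NMG_comps hle
  set d := n - c with hd
  have huniq : ∀ h ∈ G, h.1 = w.1 → h = w := by
    intro h hG he
    rcases le_total h.2 w.2 with hc | hc
    · exact hmin h hG w hw (NMG_mkle (le_of_eq he) hc)
    · exact (hmin w hw h hG (NMG_mkle (le_of_eq he.symm) hc)).symm
  rcases Nat.eq_zero_or_pos c with rfl | hc
  · simp only [Nat.zero_mul, Nat.zero_add, Nat.sub_zero] at hle1 hle2
    have hv1 : v.1 ≤ w.1 := Nat.le_of_mul_le_mul_left hle1 hn
    have hv2 : v.2 ≤ w.2 := Nat.le_of_mul_le_mul_left hle2 hn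
    have hh2 : h2 = w := hmin h2 h2G w hw (le_trans h2v (NMG_mkle hv1 hv2))
    exact hvne (le_antisymm (NMG_mkle hv1 hv2) (hh2 ▸ h2v))
  rcases Nat.eq_zero_or_pos d with hd0 | hdpos
  · have hcn' : c = n := by omega
    rw [hd0] at hle1 hle2
    rw [hcn'] at hle1 hle2
    simp only [Nat.zero_mul, Nat.add_zero] at hle1 hle2
    have hu1 : u.1 ≤ w.1 := Nat.le_of_mul_le_mul_left hle1 hn
    have hu2 : u.2 ≤ w.2 := Nat.le_of_mul_le_mul_left hle2 hn
    have hh1 : h1 = w := hmin h1 h1G w hw (le_trans h1u (NMG_mkle hu1 hu2))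
    exact hune (le_antisymm (NMG_mkle hu1 hu2) (hh1 ▸ h1u))
  have hw1u : w.1 ≤ u.1 := le_trans (hws h1 h1G) h1u.1
  have hw1v : w.1 ≤ v.1 := le_trans (hws h2 h2G) h2v.1
  have k1 : c * w.1 ≤ c * u.1 := Nat.mul_le_mul_left c hw1u
  have k2 : d * w.1 ≤ d * v.1 := Nat.mul_le_mul_left d hw1v
  have hnw : n * w.1 = c * w.1 + d * w.1 := by rw [show n = c + d by omega, Nat.add_mul]
  have hu1 : u.1 = w.1 := Nat.eq_of_mul_eq_mul_left hc (by omega)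
  have hv1 : v.1 = w.1 := Nat.eq_of_mul_eq_mul_left hdpos (by omega)
  have hh1 : h1 = w := huniq h1 h1G (le_antisymm (hu1 ▸ h1u.1) (hws h1 h1G))
  have hh2 : h2 = w := huniq h2 h2G (le_antisymm (hv1 ▸ h2v.1) (hws h2 h2G))
  have hu2 : w.2 < u.2 := by
    rcases Nat.lt_or_ge w.2 u.2 with h | h
    · exact h
    · exact (hune (Prod.ext hu1 (le_antisymm (hh1 ▸ h1u.2) h).symm)).elim
  have hv2 : w.2 < v.2 := by
    rcases Nat.lt_or_ge w.2 v.2 with h | h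
    · exact h
    · exact (hvne (Prod.ext hv1 (le_antisymm (hh2 ▸ h2v.2) h).symm)).elim
  have k3 : c * (w.2+1) ≤ c * u.2 := Nat.mul_le_mul_left c hu2
  have k4 : d * (w.2+1) ≤ d * v.2 := Nat.mul_le_mul_left d hv2
  have e1 : c * (w.2+1) = c * w.2 + c := by ring
  have e2 : d * (w.2+1) = d * w.2 + d := by ring
  have hnw2 : n * w.2 = c * w.2 + d * w.2 := by rw [show n = c + d by omega, Nat.add_mul]
  omega

private lemma NMG_exists_persistent_min (G : Finset (ℕ × ℕ)) (hne : G.Nonempty)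
    (hmin : ∀ p ∈ G, ∀ q ∈ G, p ≤ q → p = q)
    (a b : ℕ) (ha : 0 < a) (hb : 0 < b) :
    ∃ w ∈ G, persistent G w ∧ ∀ h ∈ G, a * w.1 + b * w.2 ≤ a * h.1 + b * h.2 := by
  obtain ⟨w0, hw0G, hw0⟩ := Finset.exists_min_image G (fun h => a * h.1 + b * h.2) hne
  have hw0T : w0 ∈ G.filter (fun h => a * h.1 + b * h.2 = a * w0.1 + b * w0.2) :=
    Finset.mem_filter.mpr ⟨hw0G, rfl⟩
  obtain ⟨w, hwT, hwmax⟩ := Finset.exists_max_image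
    (G.filter (fun h => a * h.1 + b * h.2 = a * w0.1 + b * w0.2)) (fun h => h.1) ⟨w0, hw0T⟩
  obtain ⟨hwG, hwL⟩ := Finset.mem_filter.mp hwT
  have hmini : ∀ h ∈ G, a * w.1 + b * w.2 ≤ a * h.1 + b * h.2 := by
    intro h hG; rw [hwL]; exact hw0 h hG
  refine ⟨w, hwG, ⟨hwG, ?_⟩, hmini⟩
  rintro u v ⟨h1, h1G, h1u⟩ ⟨h2, h2G, h2v⟩ hune hvne ⟨n, hn, c, hcn, hle⟩
  obtain ⟨hle1, hle2⟩ := NMG_comps hle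
  set d := n - c with hd
  rcases Nat.eq_zero_or_pos c with rfl | hc
  · simp only [Nat.zero_mul, Nat.zero_add, Nat.sub_zero] at hle1 hle2
    have hv1 : v.1 ≤ w.1 := Nat.le_of_mul_le_mul_left hle1 hn
    have hv2 : v.2 ≤ w.2 := Nat.le_of_mul_le_mul_left hle2 hn
    have hh2 : h2 = w := hmin h2 h2G w hwG (le_trans h2v (NMG_mkle hv1 hv2))
    exact hvne (le_antisymm (NMG_mkle hv1 hv2) (hh2 ▸ h2v))
  rcases Nat.eq_zero_or_pos d with hd0 | hdpos
  · have hcn' : c = n := by omega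
    rw [hd0] at hle1 hle2
    rw [hcn'] at hle1 hle2
    simp only [Nat.zero_mul, Nat.add_zero] at hle1 hle2
    have hu1 : u.1 ≤ w.1 := Nat.le_of_mul_le_mul_left hle1 hn
    have hu2 : u.2 ≤ w.2 := Nat.le_of_mul_le_mul_left hle2 hn
    have hh1 : h1 = w := hmin h1 h1G w hwG (le_trans h1u (NMG_mkle hu1 hu2))
    exact hune (le_antisymm (NMG_mkle hu1 hu2) (hh1 ▸ h1u))
  have hLh1u : a*h1.1+b*h1.2 ≤ a*u.1+b*u.2 :=
    Nat.add_le_add (Nat.mul_le_mul_left a h1u.1) (Nat.mul_le_mul_left b h1u.2)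
  have hLh2v : a*h2.1+b*h2.2 ≤ a*v.1+b*v.2 :=
    Nat.add_le_add (Nat.mul_le_mul_left a h2v.1) (Nat.mul_le_mul_left b h2v.2)
  have hLu : a*w.1 + b*w.2 ≤ a*u.1 + b*u.2 := le_trans (hmini h1 h1G) hLh1u
  have hLv : a*w.1 + b*w.2 ≤ a*v.1 + b*v.2 := le_trans (hmini h2 h2G) hLh2v
  have F2 : c*(a*u.1+b*u.2) + d*(a*v.1+b*v.2) ≤ c*(a*w.1+b*w.2) + d*(a*w.1+b*w.2) := by
    calc c*(a*u.1+b*u.2) + d*(a*v.1+b*v.2)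
        = a*(c*u.1+d*v.1) + b*(c*u.2+d*v.2) := by ring
      _ ≤ a*(n*w.1) + b*(n*w.2) :=
          Nat.add_le_add (Nat.mul_le_mul_left a hle1) (Nat.mul_le_mul_left b hle2)
      _ = c*(a*w.1+b*w.2) + d*(a*w.1+b*w.2) := by rw [show n = c + d by omega]; ring
  have m1 : c*(a*w.1+b*w.2) ≤ c*(a*u.1+b*u.2) := Nat.mul_le_mul_left c hLu
  have m2 : d*(a*w.1+b*w.2) ≤ d*(a*v.1+b*v.2) := Nat.mul_le_mul_left d hLv
  have eLu : a*u.1+b*u.2 = a*w.1+b*w.2 := Nat.eq_of_mul_eq_mul_left hc (by omega)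
  have eLv : a*v.1+b*v.2 = a*w.1+b*w.2 := Nat.eq_of_mul_eq_mul_left hdpos (by omega)
  have hLh1 : a*h1.1+b*h1.2 = a*w.1+b*w.2 := le_antisymm (by omega) (hmini h1 h1G)
  have hLh2 : a*h2.1+b*h2.2 = a*w.1+b*w.2 := le_antisymm (by omega) (hmini h2 h2G)
  have hu_eq := NMG_pair_eq ha hb h1u.1 h1u.2 (by omega : a*u.1+b*u.2 ≤ a*h1.1+b*h1.2)
  have hv_eq := NMG_pair_eq ha hb h2v.1 h2v.2 (by omega : a*v.1+b*v.2 ≤ a*h2.1+b*h2.2)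
  have e3 : a*(c*u.1+d*v.1) + b*(c*u.2+d*v.2) = a*(n*w.1) + b*(n*w.2) := by
    have h' : a*(c*u.1+d*v.1) + b*(c*u.2+d*v.2) = c*(a*u.1+b*u.2) + d*(a*v.1+b*v.2) := by
      ring
    rw [h', eLu, eLv, show n = c + d by omega]; ring
  have hco := NMG_pair_eq ha hb hle1 hle2 (le_of_eq e3.symm)
  have hh1T : h1 ∈ G.filter (fun h => a * h.1 + b * h.2 = a * w0.1 + b * w0.2) :=
    Finset.mem_filter.mpr ⟨h1G, by omega⟩
  have hh2T : h2 ∈ G.filter (fun h => a * h.1 + b * h.2 = a * w0.1 + b * w0.2) :=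
    Finset.mem_filter.mpr ⟨h2G, by omega⟩
  have hx1 : h1.1 ≤ w.1 := hwmax h1 hh1T
  have hx2 : h2.1 ≤ w.1 := hwmax h2 hh2T
  have hnw1 : n*w.1 = c*w.1 + d*w.1 := by rw [show n = c+d by omega, Nat.add_mul]
  have hsum : c*w.1 + d*w.1 ≤ c*h1.1 + d*h2.1 := by
    have e4 : c*u.1 + d*v.1 = c*h1.1 + d*h2.1 := by rw [hu_eq.1, hv_eq.1]
    omega
  have hfin := NMG_pair_eq hc hdpos hx1 hx2 hsum
  have ea : a*h1.1 = a*w.1 := by rw [hfin.1]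
  have eb : h1.2 = w.2 := Nat.eq_of_mul_eq_mul_left hb (by omega)
  exact hune (Prod.ext (hu_eq.1.trans hfin.1.symm) (hu_eq.2.trans eb))

end NMGhelpers

/-- Corollary non-minimal-generators: Let `G` be the minimal
generating set of a monomial ideal `I` and `g : Fin (k+1) → ℕ×ℕ` enumerate a set
`P = {g 0, …, g k}` with `P(I) ⊆ P ⊆ P*(I)`, ordered in descending y-degree, and
let `δ = max_i min(dist_x(g_i,g_{i+1}), dist_y(g_i,g_{i+1})) − 1`.  Then for every
`n ≥ δ` and every monomial `f ∈ I` there are `i` and `a ≤ δ` with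
`f^n ∈ (g_i, g_{i+1})^{n−a} · (f^a)`. -/
theorem non_minimal_generators (G : Finset (ℕ × ℕ)) (hne : G.Nonempty)
    (hmin : ∀ p ∈ G, ∀ q ∈ G, p ≤ q → p = q)
    (k : ℕ) (hk : 0 < k) (g : Fin (k + 1) → ℕ × ℕ)
    (hy : StrictAnti fun i => (g i).2)
    (hPG : ∀ i, g i ∈ G)
    (hWP : ∀ i, weaklyPersistent G (g i))
    (hPI : ∀ f, persistent G f → ∃ i, g i = f)
    (δ : ℕ)
    (hδ : δ = (Finset.univ.sup fun i : Fin k =>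
      min (dX (g i.castSucc) (g i.succ)) (dY (g i.castSucc) (g i.succ))) - 1) :
    ∀ n : ℕ, δ ≤ n → ∀ f : ℕ × ℕ, memI G f →
      ∃ i : Fin k, ∃ a : ℕ, a ≤ δ ∧
        ∃ s : Multiset (ℕ × ℕ),
          (∀ x ∈ s, x = g i.castSucc ∨ x = g i.succ) ∧
          Multiset.card s = n - a ∧ s.sum + a • f ≤ n • f := by
  intro n hδn f hf
  have hyv : ∀ i j : Fin (k+1), i < j → (g j).2 < (g i).2 := fun i j h => hy h
  have hxv : ∀ i j : Fin (k+1), i < j → (g i).1 < (g j).1 := by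
    intro i j hij
    by_contra hle
    push_neg at hle
    have heq := hmin (g j) (hPG j) (g i) (hPG i) (NMG_mkle hle (le_of_lt (hyv i j hij)))
    have h2 := hyv i j hij
    rw [heq] at h2
    omega
  set P : ℕ → ℕ × ℕ := fun j => g ⟨min j k, Nat.lt_succ_of_le (Nat.min_le_right j k)⟩
    with hPdef0
  have hPdef : ∀ j, (h : j ≤ k) → P j = g ⟨j, Nat.lt_succ_of_le h⟩ := by
    intro j h
    rw [hPdef0]
    exact congrArg g (Fin.ext (Nat.min_eq_left h))
  have hxP : ∀ j, j < k → (P j).1 < (P (j+1)).1 := by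
    intro j hj
    rw [hPdef j (by omega), hPdef (j+1) (by omega)]
    exact hxv _ _ (Fin.mk_lt_mk.mpr (by omega))
  have hyP : ∀ j, j < k → (P (j+1)).2 < (P j).2 := by
    intro j hj
    rw [hPdef j (by omega), hPdef (j+1) (by omega)]
    exact hyv _ _ (Fin.mk_lt_mk.mpr (by omega))
  set A : ℕ → ℕ := fun j => (P j).2 - (P (j+1)).2 with hAdef
  set B : ℕ → ℕ := fun j => (P (j+1)).1 - (P j).1 with hBdef
  have hApos : ∀ j, j < k → 0 < A j := by
    intro j hj; have := hyP j hj; simp only [hAdef]; omega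
  have hBpos : ∀ j, j < k → 0 < B j := by
    intro j hj; have := hxP j hj; simp only [hBdef]; omega
  have hBx : ∀ j, j < k → (P (j+1)).1 = (P j).1 + B j := by
    intro j hj; have := hxP j hj; simp only [hBdef]; omega
  have hAy : ∀ j, j < k → (P j).2 = (P (j+1)).2 + A j := by
    intro j hj; have := hyP j hj; simp only [hAdef]; omega
  -- convexity of the boundary sequence, from weak persistence
  have hstep : ∀ j, j + 1 < k → A (j+1) * B j ≤ A j * B (j+1) := by
    intro j hj
    by_contra hcon
    push_neg at hcon
    have hj1 : j + 1 ≤ k := by omega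
    have hj2 : j + 2 ≤ k := by omega
    have hq1 : (P (j+1)).1 = (P j).1 + B j := hBx j (by omega)
    have hr1 : (P (j+2)).1 = (P (j+1)).1 + B (j+1) := hBx (j+1) (by omega)
    have hp2 : (P j).2 = (P (j+1)).2 + A j := hAy j (by omega)
    have hq2 : (P (j+1)).2 = (P (j+2)).2 + A (j+1) := hAy (j+1) (by omega)
    have hc0 : 0 < B (j+1) := hBpos (j+1) (by omega)
    have hd0 : 0 < B j := hBpos j (by omega)
    set c := B (j+1) with hcdef
    set dd := B j with hdddef
    set n0 := c + dd with hn0def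
    have hn0 : 0 < n0 := by omega
    obtain ⟨_, hWPq⟩ := hWP ⟨j+1, Nat.lt_succ_of_le hj1⟩
    rw [← hPdef (j+1) hj1] at hWPq
    have hsum : (Multiset.replicate c (P j) + Multiset.replicate dd (P (j+2))).sum
        = c • (P j) + dd • (P (j+2)) := by
      rw [Multiset.sum_add, Multiset.sum_replicate, Multiset.sum_replicate]
    have hmem : memNpow G n0 (c • (P j) + dd • (P (j+2))) := by
      refine ⟨Multiset.replicate c (P j) + Multiset.replicate dd (P (j+2)), ?_, ?_, le_of_eq hsum⟩
      · intro x hx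
        rcases Multiset.mem_add.mp hx with h | h
        · rw [Multiset.eq_of_mem_replicate h, hPdef j (by omega)]; exact hPG _
        · rw [Multiset.eq_of_mem_replicate h, hPdef (j+2) hj2]; exact hPG _
      · simp [Multiset.card_replicate, hn0def]
    have hx_eq : c * (P j).1 + dd * (P (j+2)).1 = n0 * (P (j+1)).1 := by
      rw [hr1, hq1, hn0def]; ring
    have hy_lt : c * (P j).2 + dd * (P (j+2)).2 < n0 * (P (j+1)).2 := by
      rw [hp2, hq2, hn0def]
      nlinarith [hcon]
    have hle : c • (P j) + dd • (P (j+2)) ≤ n0 • (P (j+1)) := by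
      constructor <;>
        simp only [Prod.fst_add, Prod.snd_add, Prod.smul_fst, Prod.smul_snd, smul_eq_mul] <;>
        omega
    have heq := (hWPq n0 hn0).2 _ hmem hle
    have := congrArg Prod.snd heq
    simp only [Prod.snd_add, Prod.smul_snd, smul_eq_mul] at this
    omega
  have hedge := NMG_edge_bound k P A B hBx hAy hBpos hstep
  obtain ⟨h0, h0G, h0f⟩ := hf
  -- extremes of G
  have hyk : (P k).2 ≤ f.2 := by
    obtain ⟨wy, hwyG, hwymin⟩ := Finset.exists_min_image G (fun h => h.2) hne
    obtain ⟨jy, hjy⟩ := hPI wy (NMG_persistent_min_snd G hmin wy hwyG hwymin)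
    have h1 : (P k).2 ≤ wy.2 := by
      rw [hPdef k (le_refl k), ← hjy]
      exact hy.antitone (Fin.le_last jy)
    exact le_trans (le_trans h1 (hwymin h0 h0G)) h0f.2
  have hx0 : (P 0).1 ≤ f.1 := by
    obtain ⟨wx, hwxG, hwxmin⟩ := Finset.exists_min_image G (fun h => h.1) hne
    obtain ⟨jx, hjx⟩ := hPI wx (NMG_persistent_min_fst G hmin wx hwxG hwxmin)
    have h1 : (P 0).1 ≤ wx.1 := by
      rw [hPdef 0 (Nat.zero_le k), ← hjx]
      rcases (Fin.zero_le (a := jx)).lt_or_eq with h | h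
      · exact le_of_lt (hxv _ _ (lt_of_le_of_lt (le_of_eq (Fin.ext (by simp))) h))
      · rw [← h]; exact le_of_eq (congrArg (fun t => (g t).1) (Fin.ext (by simp)))
    exact le_trans (le_trans h1 (hwxmin h0 h0G)) h0f.1
  rcases le_or_gt (P 0).2 f.2 with hcase | hcase
  · -- f dominates g 0
    refine ⟨⟨0, hk⟩, 0, Nat.zero_le _,
      Multiset.replicate n (g (⟨0, hk⟩ : Fin k).castSucc), ?_, ?_, ?_⟩
    · intro x hx; exact Or.inl (Multiset.eq_of_mem_replicate hx)
    · simp [Multiset.card_replicate]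
    · rw [Multiset.sum_replicate, zero_smul, add_zero]
      have hg0 : g ((⟨0, hk⟩ : Fin k).castSucc) = P 0 := by
        rw [hPdef 0 (Nat.zero_le k)]; exact congrArg g (Fin.ext (by simp))
      rw [hg0]
      constructor <;> simp only [Prod.smul_fst, Prod.smul_snd, smul_eq_mul]
      · exact Nat.mul_le_mul_left n hx0
      · exact Nat.mul_le_mul_left n hcase
  -- strip selection
  have hi_le : Nat.findGreatest (fun j => f.2 < (P j).2) k ≤ k := Nat.findGreatest_le k
  have hi_spec : f.2 < (P (Nat.findGreatest (fun j => f.2 < (P j).2) k)).2 :=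
    Nat.findGreatest_spec (P := fun j => f.2 < (P j).2) (Nat.zero_le k) hcase
  have hi_gt0 : ∀ m, Nat.findGreatest (fun j => f.2 < (P j).2) k < m → m ≤ k →
      ¬ (f.2 < (P m).2) := fun m h1 h2 =>
    Nat.findGreatest_is_greatest (P := fun j => f.2 < (P j).2) h1 h2
  set iv := Nat.findGreatest (fun j => f.2 < (P j).2) k with hivdef
  have hik : iv < k := by
    rcases eq_or_lt_of_le hi_le with h | h
    · exfalso; rw [h] at hi_spec; omega
    · exact h
  have hi_gt : (P (iv+1)).2 ≤ f.2 := Nat.le_of_not_lt (hi_gt0 (iv+1) (by omega) (by omega))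
  -- lower bound for the i-th edge functional on f
  obtain ⟨w, hwG, hwpers, hwmin⟩ := NMG_exists_persistent_min G hne hmin
    (A iv) (B iv) (hApos iv hik) (hBpos iv hik)
  obtain ⟨jf, hjf⟩ := hPI w hwpers
  have hjfk : (jf : ℕ) ≤ k := by omega
  have hPjf : P (jf : ℕ) = w := by
    rw [hPdef _ hjfk, ← hjf]
  have hLf : A iv * (P iv).1 + B iv * (P iv).2 ≤ A iv * f.1 + B iv * f.2 := by
    have h1 := hedge iv hik (jf : ℕ) hjfk
    rw [hPjf] at h1
    have h2 := hwmin h0 h0G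
    have h3 : A iv * h0.1 + B iv * h0.2 ≤ A iv * f.1 + B iv * f.2 :=
      Nat.add_le_add (Nat.mul_le_mul_left _ h0f.1) (Nat.mul_le_mul_left _ h0f.2)
    omega
  have hfx : (P iv).1 < f.1 := by
    have e1 : B iv * (f.2+1) ≤ B iv * (P iv).2 := Nat.mul_le_mul_left _ hi_spec
    have e2 : B iv * (f.2+1) = B iv * f.2 + B iv := by ring
    have hb := hBpos iv hik
    have h4 : A iv * (P iv).1 < A iv * f.1 := by omega
    exact Nat.lt_of_mul_lt_mul_left h4
  rcases le_or_gt (P (iv+1)).1 f.1 with hcase2 | hcase2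
  · -- f dominates g (iv+1)
    refine ⟨⟨iv, hik⟩, 0, Nat.zero_le _,
      Multiset.replicate n (g (⟨iv, hik⟩ : Fin k).succ), ?_, ?_, ?_⟩
    · intro x hx; exact Or.inr (Multiset.eq_of_mem_replicate hx)
    · simp [Multiset.card_replicate]
    · rw [Multiset.sum_replicate, zero_smul, add_zero]
      have hgq : g ((⟨iv, hik⟩ : Fin k).succ) = P (iv+1) := by
        rw [hPdef (iv+1) (by omega)]; exact congrArg g (Fin.ext (by simp))
      rw [hgq]
      constructor <;> simp only [Prod.smul_fst, Prod.smul_snd, smul_eq_mul]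
      · exact Nat.mul_le_mul_left n hcase2
      · exact Nat.mul_le_mul_left n hi_gt
  -- main interpolation case
  have hgp : g ((⟨iv, hik⟩ : Fin k).castSucc) = P iv := by
    rw [hPdef iv (by omega)]; exact congrArg g (Fin.ext (by simp))
  have hgq : g ((⟨iv, hik⟩ : Fin k).succ) = P (iv+1) := by
    rw [hPdef (iv+1) (by omega)]; exact congrArg g (Fin.ext (by simp))
  have hδi : min (A iv) (B iv) - 1 ≤ δ := by
    have hsup := Finset.le_sup (f := fun i : Fin k =>
      min (dX (g i.castSucc) (g i.succ)) (dY (g i.castSucc) (g i.succ)))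
      (Finset.mem_univ (⟨iv, hik⟩ : Fin k))
    have hdx : dX (g (⟨iv, hik⟩ : Fin k).castSucc) (g (⟨iv, hik⟩ : Fin k).succ) = B iv := by
      rw [hgp, hgq]
      have h1 := hxP iv hik
      have h2 := hBx iv hik
      simp only [dX]
      omega
    have hdy : dY (g (⟨iv, hik⟩ : Fin k).castSucc) (g (⟨iv, hik⟩ : Fin k).succ) = A iv := by
      rw [hgp, hgq]
      have h1 := hyP iv hik
      have h2 := hAy iv hik
      simp only [dY]
      omega
    have hsup' : min (dX (g (⟨iv, hik⟩ : Fin k).castSucc) (g (⟨iv, hik⟩ : Fin k).succ))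
        (dY (g (⟨iv, hik⟩ : Fin k).castSucc) (g (⟨iv, hik⟩ : Fin k).succ)) ≤
        Finset.univ.sup (fun i : Fin k =>
          min (dX (g i.castSucc) (g i.succ)) (dY (g i.castSucc) (g i.succ))) := hsup
    rw [hdx, hdy] at hsup'
    omega
  set β := (P (iv+1)).1 - f.1 with hβdef
  set γx := f.1 - (P iv).1 with hγxdef
  set α := f.2 - (P (iv+1)).2 with hαdef
  set α' := (P iv).2 - f.2 with hα'def
  have hBiv := hBx iv hik
  have hAiv := hAy iv hik
  have hβγ : β + γx = B iv := by omega
  have hαα : α + α' = A iv := by omega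
  have hβ1 : 1 ≤ β := by omega
  have hα'1 : 1 ≤ α' := by omega
  rcases le_or_gt (B iv) (A iv) with hBA | hBA
  · -- x-distance is the smaller one : use m divisible by B iv
    set e := n / B iv with hedef
    set m := B iv * e with hmdef
    have hdm := Nat.div_add_mod n (B iv)
    rw [← hedef] at hdm
    set a' := n - m with ha'def
    have hmn : m ≤ n := by
      have := Nat.mod_lt n (hBpos iv hik)
      omega
    have ham : m + a' = n := by omega
    have ha'δ : a' ≤ δ := by
      have h1 := Nat.mod_lt n (hBpos iv hik)
      have h2 : a' = n % B iv := by omega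
      omega
    refine ⟨⟨iv, hik⟩, a', ha'δ,
      Multiset.replicate (e*β) (g (⟨iv, hik⟩ : Fin k).castSucc) +
      Multiset.replicate (e*γx) (g (⟨iv, hik⟩ : Fin k).succ), ?_, ?_, ?_⟩
    · intro x hx
      rcases Multiset.mem_add.mp hx with h | h
      · exact Or.inl (Multiset.eq_of_mem_replicate h)
      · exact Or.inr (Multiset.eq_of_mem_replicate h)
    · simp only [Multiset.card_add, Multiset.card_replicate]
      have : e*β + e*γx = B iv * e := by rw [← hβγ]; ring
      omega
    · rw [Multiset.sum_add, Multiset.sum_replicate, Multiset.sum_replicate, hgp, hgq]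
      have hkey : A iv * β ≤ (β+γx) * α := by
        have E1 : B iv * (P iv).2 = B iv * (P (iv+1)).2 + B iv * A iv := by
          rw [hAiv]; ring
        have E2 : A iv * f.1 = A iv * (P iv).1 + A iv * γx := by
          rw [show f.1 = (P iv).1 + γx by omega]; ring
        have E3 : B iv * f.2 = B iv * (P (iv+1)).2 + B iv * α := by
          rw [show f.2 = (P (iv+1)).2 + α by omega]; ring
        have E5 : A iv * B iv = A iv * β + A iv * γx := by rw [← hβγ]; ring
        have E6 : B iv * A iv = A iv * B iv := Nat.mul_comm _ _
        have E7 : (β+γx) * α = B iv * α := by rw [hβγ]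
        omega
      have hxb := NMG_build_x (P iv).1 e β γx
      have hyb := NMG_build_y (P (iv+1)).2 (A iv) e β γx α hkey
      constructor <;>
        simp only [Prod.fst_add, Prod.snd_add, Prod.smul_fst, Prod.smul_snd, smul_eq_mul]
      · -- x component
        have eq1 : (e*γx) * (P (iv+1)).1 = (e*γx) * ((P iv).1 + (β+γx)) := by
          rw [hβγ, ← hBiv]
        have eq2 : ((β+γx)*e) * ((P iv).1 + γx) = m * f.1 := by
          rw [show (P iv).1 + γx = f.1 by omega, hβγ, hmdef, Nat.mul_comm (B iv) e]
        have eq3 : n * f.1 = m * f.1 + a' * f.1 := by rw [← ham, Nat.add_mul]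
        omega
      · -- y component
        have eq1 : (e*β) * (P iv).2 = (e*β) * ((P (iv+1)).2 + A iv) := by rw [hAiv]
        have eq2 : ((β+γx)*e) * ((P (iv+1)).2 + α) = m * f.2 := by
          rw [show (P (iv+1)).2 + α = f.2 by omega, hβγ, hmdef, Nat.mul_comm (B iv) e]
        have eq3 : n * f.2 = m * f.2 + a' * f.2 := by rw [← ham, Nat.add_mul]
        omega
  · -- y-distance is the smaller one : use m divisible by A iv
    set e := n / A iv with hedef
    set m := A iv * e with hmdef
    have hdm := Nat.div_add_mod n (A iv)
    rw [← hedef] at hdm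
    set a' := n - m with ha'def
    have hmn : m ≤ n := by
      have := Nat.mod_lt n (hApos iv hik)
      omega
    have ham : m + a' = n := by omega
    have ha'δ : a' ≤ δ := by
      have h1 := Nat.mod_lt n (hApos iv hik)
      have h2 : a' = n % A iv := by omega
      omega
    set γy := f.2 - (P (iv+1)).2 with hγydef
    have hαγ : α' + γy = A iv := by omega
    refine ⟨⟨iv, hik⟩, a', ha'δ,
      Multiset.replicate (e*γy) (g (⟨iv, hik⟩ : Fin k).castSucc) +
      Multiset.replicate (e*α') (g (⟨iv, hik⟩ : Fin k).succ), ?_, ?_, ?_⟩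
    · intro x hx
      rcases Multiset.mem_add.mp hx with h | h
      · exact Or.inl (Multiset.eq_of_mem_replicate h)
      · exact Or.inr (Multiset.eq_of_mem_replicate h)
    · simp only [Multiset.card_add, Multiset.card_replicate]
      have : e*γy + e*α' = A iv * e := by rw [← hαγ]; ring
      omega
    · rw [Multiset.sum_add, Multiset.sum_replicate, Multiset.sum_replicate, hgp, hgq]
      have hkey : B iv * α' ≤ (α'+γy) * γx := by
        have E1 : B iv * (P iv).2 = B iv * f.2 + B iv * α' := by
          rw [show (P iv).2 = f.2 + α' by omega]; ring
        have E2 : A iv * f.1 = A iv * (P iv).1 + A iv * γx := by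
          rw [show f.1 = (P iv).1 + γx by omega]; ring
        have E7 : (α'+γy) * γx = A iv * γx := by rw [hαγ]
        omega
      have hxb := NMG_build_y (P iv).1 (B iv) e α' γy γx hkey
      have hyb := NMG_build_x (P (iv+1)).2 e α' γy
      constructor <;>
        simp only [Prod.fst_add, Prod.snd_add, Prod.smul_fst, Prod.smul_snd, smul_eq_mul]
      · -- x component
        have eq1 : (e*α') * (P (iv+1)).1 = (e*α') * ((P iv).1 + B iv) := by rw [hBiv]
        have eq2 : ((α'+γy)*e) * ((P iv).1 + γx) = m * f.1 := by
          rw [show (P iv).1 + γx = f.1 by omega, hαγ, hmdef, Nat.mul_comm (A iv) e]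
        have eq3 : n * f.1 = m * f.1 + a' * f.1 := by rw [← ham, Nat.add_mul]
        omega
      · -- y component
        have eq1 : (e*γy) * (P iv).2 = (e*γy) * ((P (iv+1)).2 + (α'+γy)) := by
          rw [hαγ, ← hAiv]
        have eq2 : ((α'+γy)*e) * ((P (iv+1)).2 + γy) = m * f.2 := by
          rw [show (P (iv+1)).2 + γy = f.2 by omega, hαγ, hmdef, Nat.mul_comm (A iv) e]
        have eq3 : n * f.2 = m * f.2 + a' * f.2 := by rw [← ham, Nat.add_mul]
        omega
end

section
/- Let I be a monomial ideal in k[x,y] with persistent generators P(I) = {g_1, …, g_{k+1}} ordered in descending y-degree, and let 𝔞 be the ideal generated by P(I). Then 𝔞 is a reduction of I with reduction number at most (μ(I) − |P(I)|)·δ_{P(I)}: that is, for δ = (μ(I) − |P(I)|)·δ_{P(I)} and all n ≥ 0, I^{δ+n} = 𝔞^n · I^δ. -/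
lemma aux_phi_mono (A B : ℕ) (p q : ℕ×ℕ) (h : p ≤ q) :
    A * p.1 + B * p.2 ≤ A * q.1 + B * q.2 :=
  Nat.add_le_add (Nat.mul_le_mul_left _ h.1) (Nat.mul_le_mul_left _ h.2)

lemma aux_min_persistent (G : Finset (ℕ×ℕ)) (A B : ℕ) (hA : 0 < A) (hB : 0 < B)
    (m : ℕ×ℕ) (hm : m ∈ G)
    (hstrict : ∀ p ∈ G, p ≠ m → A*m.1+B*m.2 < A*p.1+B*p.2) :
    persistent G m := by
  refine ⟨hm, ?_⟩
  rintro p q ⟨cp, hcp, hcpl⟩ ⟨cq, hcq, hcql⟩ hpne hqne ⟨n, hn, j, hj, hle⟩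
  set f : ℕ×ℕ → ℕ := fun r => A*r.1+B*r.2 with hf
  have hGm : ∀ c ∈ G, f m ≤ f c := by
    intro c hc
    by_cases h : c = m
    · subst h; exact le_refl _
    · exact (hstrict c hc h).le
  have main : ∀ (r c : ℕ×ℕ), c ∈ G → c ≤ r → r ≠ m → f r ≤ f m → False := by
    intro r c hcG hcr hrne hfr
    have h1 : f m ≤ f c := hGm c hcG
    have h2 : f c ≤ f r := aux_phi_mono A B _ _ hcr
    have hfc : f c = f m := le_antisymm (le_trans h2 hfr) h1
    have hcm : c = m := by
      by_contra hne
      exact absurd hfc (Nat.ne_of_gt (hstrict c hcG hne))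
    have hcr' : m ≤ r := hcm ▸ hcr
    have hfr' : f r = f m := le_antisymm hfr (aux_phi_mono A B _ _ hcr')
    have h1' : A * m.1 ≤ A * r.1 := Nat.mul_le_mul_left _ hcr'.1
    have h2' : B * m.2 ≤ B * r.2 := Nat.mul_le_mul_left _ hcr'.2
    have e1 : A * r.1 = A * m.1 := by simp only [hf] at hfr'; omega
    have e2 : B * r.2 = B * m.2 := by simp only [hf] at hfr'; omega
    exact hrne (Prod.ext (Nat.eq_of_mul_eq_mul_left hA e1) (Nat.eq_of_mul_eq_mul_left hB e2))
  have h1 : j * p.1 + (n-j) * q.1 ≤ n * m.1 := by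
    have := hle.1; simpa using this
  have h2 : j * p.2 + (n-j) * q.2 ≤ n * m.2 := by
    have := hle.2; simpa using this
  have key : j * f p + (n-j) * f q ≤ n * f m := by
    have := Nat.add_le_add (Nat.mul_le_mul_left A h1) (Nat.mul_le_mul_left B h2)
    simp only [hf]; ring_nf; ring_nf at this; linarith
  have hfp : f m ≤ f p := le_trans (hGm cp hcp) (aux_phi_mono A B _ _ hcpl)
  have hfq : f m ≤ f q := le_trans (hGm cq hcq) (aux_phi_mono A B _ _ hcql)
  have hsplit : n * f m = j * f m + (n-j) * f m := by
    have hsum : j + (n - j) = n := by omega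
    calc n * f m = (j + (n-j)) * f m := by rw [hsum]
    _ = j * f m + (n-j) * f m := by ring
  by_cases hj0 : j = 0
  · subst hj0
    simp only [Nat.zero_mul, Nat.zero_add, Nat.sub_zero] at key
    have : f q ≤ f m := Nat.le_of_mul_le_mul_left (by linarith [key]) hn
    exact main q cq hcq hcql hqne this
  · have h3 : j * f m ≤ j * f p := Nat.mul_le_mul_left _ hfp
    have h4 : (n-j) * f m ≤ (n-j) * f q := Nat.mul_le_mul_left _ hfq
    have h5 : j * f p ≤ j * f m := by linarith
    have : f p ≤ f m := Nat.le_of_mul_le_mul_left (by linarith) (Nat.pos_of_ne_zero hj0)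
    exact main p cp hcp hcpl hpne this

lemma aux_exists_min (G : Finset (ℕ×ℕ)) (hne : G.Nonempty) (A B : ℕ) (hA : 0 < A) (hB : 0 < B) :
    ∃ m ∈ G, persistent G m ∧ ∀ p ∈ G, A*m.1+B*m.2 ≤ A*p.1+B*p.2 := by
  set M : ℕ := 1 + G.sup (fun p => p.1) with hM
  have hxlt : ∀ p ∈ G, p.1 < M := by
    intro p hp
    have h' : p.1 ≤ G.sup (fun p => p.1) := Finset.le_sup hp
    omega
  set φ : ℕ×ℕ → ℕ := fun p => M * (A * p.1 + B * p.2) + p.1 with hφ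
  obtain ⟨m, hm, hmin⟩ := G.exists_min_image φ hne
  have hdom : ∀ p q : ℕ×ℕ, p ∈ G → q ∈ G → A*p.1+B*p.2 < A*q.1+B*q.2 → φ p < φ q := by
    intro p q hp hq hlt
    have h1 : M * (A*p.1+B*p.2) + M ≤ M * (A*q.1+B*q.2) := by
      have := Nat.mul_le_mul_left M hlt
      nlinarith [Nat.mul_le_mul_left M (Nat.succ_le_of_lt hlt)]
    have := hxlt p hp
    simp only [hφ]; omega
  have hfmin : ∀ p ∈ G, A*m.1+B*m.2 ≤ A*p.1+B*p.2 := by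
    intro p hp
    by_contra hcon
    push_neg at hcon
    exact absurd (hmin p hp) (not_le.2 (hdom p m hp hm hcon))
  refine ⟨m, hm, ?_, hfmin⟩
  apply aux_min_persistent G (M*A+1) (M*B) (by positivity) (by positivity) m hm
  have hφeq : ∀ p : ℕ×ℕ, (M*A+1)*p.1 + (M*B)*p.2 = φ p := by
    intro p; simp only [hφ]; ring
  intro p hp hne'
  rw [hφeq, hφeq]
  rcases lt_trichotomy (A*p.1+B*p.2) (A*m.1+B*m.2) with h | h | h
  · exact absurd h (not_lt.2 (hfmin p hp))
  · have hφle : φ m ≤ φ p := hmin p hp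
    have hx : m.1 ≤ p.1 := by
      simp only [hφ] at hφle; rw [h] at hφle; omega
    rcases Nat.lt_or_ge m.1 p.1 with hx' | hx'
    · simp only [hφ]; rw [h]; omega
    · have hx1 : p.1 = m.1 := le_antisymm hx' hx
      have hax : A * p.1 = A * m.1 := by rw [hx1]
      have : B * p.2 = B * m.2 := by omega
      have : p.2 = m.2 := Nat.eq_of_mul_eq_mul_left hB this
      exact absurd (Prod.ext hx1 this) hne'
  · exact hdom m p hm hp h

lemma aux_lemB (P Q h : ℕ×ℕ) (hx1 : P.1 < h.1) (hx2 : h.1 < Q.1)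
    (hy2 : Q.2 < h.2) (hy1 : h.2 < P.2)
    (hab : (P.2 - Q.2)*P.1 + (Q.1-P.1)*P.2 ≤ (P.2 - Q.2)*h.1 + (Q.1-P.1)*h.2) :
    ∃ a, 0 < a ∧ a < min (Q.1-P.1) (P.2-Q.2) ∧
      a • P + (min (Q.1-P.1) (P.2-Q.2) - a) • Q ≤ (min (Q.1-P.1) (P.2-Q.2)) • h := by
  obtain ⟨u, hu1, hu2⟩ : ∃ u, h.1 = P.1 + u ∧ 0 < u := ⟨h.1 - P.1, by omega, by omega⟩
  obtain ⟨v, hv1, hv2⟩ : ∃ v, h.2 = Q.2 + v ∧ 0 < v := ⟨h.2 - Q.2, by omega, by omega⟩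
  obtain ⟨s, hs1, hs2⟩ : ∃ s, Q.1 = P.1 + u + s ∧ 0 < s := ⟨Q.1 - h.1, by omega, by omega⟩
  obtain ⟨w, hw1, hw2⟩ : ∃ w, P.2 = Q.2 + v + w ∧ 0 < w := ⟨P.2 - h.2, by omega, by omega⟩
  have hdx : Q.1 - P.1 = u + s := by omega
  have hdy : P.2 - Q.2 = v + w := by omega
  rw [hdx, hdy] at hab ⊢
  have hkey2 : s * w ≤ u * v := by
    rw [hu1, hv1, hw1] at hab
    nlinarith [hab]
  rcases le_or_gt (v + w) (u + s) with hc | hc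
  · have hN : min (u + s) (v + w) = v + w := by omega
    refine ⟨v, hv2, by omega, ?_⟩
    rw [hN, show v + w - v = w from by omega]
    refine Prod.le_def.mpr ⟨?_, ?_⟩
    · simp only [Prod.fst_add, Prod.smul_fst, smul_eq_mul]
      rw [hs1, hu1]
      nlinarith [hkey2]
    · simp only [Prod.snd_add, Prod.smul_snd, smul_eq_mul]
      rw [hw1, hv1]
      exact le_of_eq (by ring)
  · have hN : min (u + s) (v + w) = u + s := by omega
    refine ⟨s, hs2, by omega, ?_⟩
    rw [hN, show u + s - s = u from by omega]
    refine Prod.le_def.mpr ⟨?_, ?_⟩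
    · simp only [Prod.fst_add, Prod.smul_fst, smul_eq_mul]
      rw [hs1, hu1]
      exact le_of_eq (by ring)
    · simp only [Prod.snd_add, Prod.smul_snd, smul_eq_mul]
      rw [hw1, hv1]
      ring_nf
      have h1 : Q.2 * s + (s * v + s * w) ≤ Q.2 * s + (s * v + u * v) := by
        omega
      linarith [h1]

lemma aux_chain_min (x y : ℕ → ℕ) (k : ℕ)
    (hxm : ∀ j, j < k → x j < x (j+1))
    (hym : ∀ j, j < k → y (j+1) < y j)
    (hconv : ∀ j, j + 1 < k →
      (y (j+1) - y (j+2)) * (x (j+1) - x j) < (y j - y (j+1)) * (x (j+2) - x (j+1)))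
    (i : ℕ) (hi : i < k) :
    ∀ j, j ≤ k →
      (y i - y (i+1)) * x i + (x (i+1) - x i) * y i ≤
      (y i - y (i+1)) * x j + (x (i+1) - x i) * y j := by
  set dx : ℕ → ℕ := fun j => x (j+1) - x j with hdx
  set dy : ℕ → ℕ := fun j => y j - y (j+1) with hdy
  have hdxp : ∀ j, j < k → 0 < dx j := fun j hj => by simp only [hdx]; have := hxm j hj; omega
  have hdyp : ∀ j, j < k → 0 < dy j := fun j hj => by simp only [hdy]; have := hym j hj; omega
  have hxs : ∀ j, j < k → x (j+1) = x j + dx j := fun j hj => by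
    simp only [hdx]; have := hxm j hj; omega
  have hys : ∀ j, j < k → y j = y (j+1) + dy j := fun j hj => by
    simp only [hdy]; have := hym j hj; omega
  have Pup : ∀ j, i ≤ j → j < k → dy j * dx i ≤ dy i * dx j := by
    intro j hij hjk
    induction j with
    | zero =>
      have hi0 : i = 0 := by omega
      rw [hi0]
    | succ j ih =>
      rcases Nat.lt_or_ge i (j+1) with hij' | hij'
      · have hij2 : i ≤ j := by omega
        have hjk2 : j < k := by omega
        have IH := ih hij2 hjk2
        have hc := hconv j hjk
        have h1 : dy (j+1) * dx i * dx j ≤ dy i * dx (j+1) * dx j := by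
          calc dy (j+1) * dx i * dx j = (dy (j+1) * dx j) * dx i := by ring
          _ ≤ (dy j * dx (j+1)) * dx i := Nat.mul_le_mul_right _ (le_of_lt hc)
          _ = (dy j * dx i) * dx (j+1) := by ring
          _ ≤ (dy i * dx j) * dx (j+1) := Nat.mul_le_mul_right _ IH
          _ = dy i * dx (j+1) * dx j := by ring
        exact Nat.le_of_mul_le_mul_right h1 (hdxp j hjk2)
      · have hij1 : i = j + 1 := by omega
        rw [← hij1]
  have Pdn : ∀ d j, j + d = i → dy i * dx j ≤ dy j * dx i := by
    intro d
    induction d with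
    | zero =>
      intro j hj
      have hji : j = i := by omega
      rw [hji]
    | succ d ih =>
      intro j hj
      have hj1 : (j+1) + d = i := by omega
      have IH := ih (j+1) hj1
      have hjk : j + 1 < k := by omega
      have hc := hconv j hjk
      have h1 : dy i * dx j * dx (j+1) ≤ dy j * dx i * dx (j+1) := by
        calc dy i * dx j * dx (j+1) = (dy i * dx (j+1)) * dx j := by ring
        _ ≤ (dy (j+1) * dx i) * dx j := Nat.mul_le_mul_right _ IH
        _ = (dy (j+1) * dx j) * dx i := by ring
        _ ≤ (dy j * dx (j+1)) * dx i := Nat.mul_le_mul_right _ (le_of_lt hc)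
        _ = dy j * dx i * dx (j+1) := by ring
      exact Nat.le_of_mul_le_mul_right h1 (hdxp (j+1) hjk)
  set φ : ℕ → ℕ := fun j => dy i * x j + dx i * y j with hφ
  have stepUp : ∀ j, i ≤ j → j < k → φ j ≤ φ (j+1) := by
    intro j hij hjk
    have := Pup j hij hjk
    simp only [hφ]
    rw [hxs j hjk, hys j hjk]
    ring_nf
    nlinarith [this]
  have stepDn : ∀ j, j < i → φ (j+1) ≤ φ j := by
    intro j hji
    have hd : dy i * dx j ≤ dy j * dx i := Pdn (i - j) j (by omega)
    have hjk : j < k := by omega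
    simp only [hφ]
    rw [hxs j hjk, hys j hjk]
    ring_nf
    nlinarith [hd]
  have up : ∀ j, i ≤ j → j ≤ k → φ i ≤ φ j := by
    intro j hij hjk
    induction j with
    | zero =>
      have hi0 : i = 0 := by omega
      rw [hi0]
    | succ j ih =>
      rcases Nat.lt_or_ge i (j+1) with hij' | hij'
      · exact le_trans (ih (by omega) (by omega)) (stepUp j (by omega) (by omega))
      · have hij1 : i = j + 1 := by omega
        rw [← hij1]
  have dn : ∀ d j, j + d = i → φ i ≤ φ j := by
    intro d
    induction d with
    | zero =>
      intro j hj
      have hji : j = i := by omega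
      rw [hji]
    | succ d ih =>
      intro j hj
      exact le_trans (ih (j+1) (by omega)) (stepDn j (by omega))
  intro j hjk
  rcases Nat.lt_or_ge j i with h | h
  · exact dn (i - j) j (by omega)
  · exact up j h hjk

/-- Corollary/Remark reduction-number: Let `G` be the minimal
generating set of `I`, and let `g : Fin (k+1) → ℕ×ℕ` enumerate exactly the set
`P(I)` of persistent generators, ordered in descending y-degree.  With
`δ_P = max_i min(dist_x(g_i,g_{i+1}), dist_y(g_i,g_{i+1})) − 1` and
`δ = (μ(I) − |P(I)|)·δ_P`, the ideal `𝔞 = (P(I))` is a reduction of `I` with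
reduction number at most `δ`: for all `n ≥ 0`, `I^{δ+n} = 𝔞^n · I^δ`
(as sets of monomials). -/
theorem reduction_number (G : Finset (ℕ × ℕ)) (hne : G.Nonempty)
    (hmin : ∀ p ∈ G, ∀ q ∈ G, p ≤ q → p = q)
    (k : ℕ) (g : Fin (k + 1) → ℕ × ℕ)
    (hy : StrictAnti fun i => (g i).2)
    (hP : ∀ f : ℕ × ℕ, persistent G f ↔ ∃ i, g i = f)
    (δp δ : ℕ)
    (hδp : δp = (Finset.univ.sup fun i : Fin k =>
      min (dX (g i.castSucc) (g i.succ)) (dY (g i.castSucc) (g i.succ))) - 1)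
    (hδ : δ = (G.card - (k + 1)) * δp) :
    ∀ n : ℕ, ∀ m : ℕ × ℕ,
      memNpow G (δ + n) m ↔
        ∃ s : Multiset (ℕ × ℕ), (∀ x ∈ s, ∃ i, x = g i) ∧ Multiset.card s = n ∧
          ∃ m' : ℕ × ℕ, memNpow G δ m' ∧ s.sum + m' ≤ m := by
  -- basic facts about the persistent chain
  have hgG : ∀ i : Fin (k+1), g i ∈ G := fun i => ((hP (g i)).mpr ⟨i, rfl⟩).1
  have hginj : Function.Injective g := fun a b hab => hy.injective (congrArg Prod.snd hab)
  obtain ⟨q, hqdef⟩ : ∃ q : ℕ → ℕ×ℕ,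
      ∀ j, q j = g ⟨min j k, Nat.lt_succ_of_le (Nat.min_le_right j k)⟩ := ⟨_, fun _ => rfl⟩
  have hqg : ∀ (j : ℕ), j ≤ k → ∀ (hj : j < k + 1), q j = g ⟨j, hj⟩ := by
    intro j hjk hj
    rw [hqdef]
    congr 1
    exact Fin.ext (by simp; omega)
  have hqG : ∀ j, q j ∈ G := fun j => by rw [hqdef]; exact hgG _
  have hqpers : ∀ j, persistent G (q j) := fun j => (hP _).2 ⟨_, (hqdef j).symm⟩
  have hqy : ∀ a b : ℕ, a < b → b ≤ k → (q b).2 < (q a).2 := by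
    intro a b hab hbk
    rw [hqdef, hqdef]
    exact hy (show (⟨min a k, _⟩ : Fin (k+1)) < ⟨min b k, _⟩ by
      rw [Fin.mk_lt_mk]; omega)
  have hanti : ∀ p ∈ G, ∀ r ∈ G, p.1 ≤ r.1 → p.2 ≤ r.2 → p = r := by
    intro p hp r hr h1 h2
    exact hmin p hp r hr (Prod.le_def.mpr ⟨h1, h2⟩)
  have hqx : ∀ a b : ℕ, a < b → b ≤ k → (q a).1 < (q b).1 := by
    intro a b hab hbk
    by_contra hcon
    push_neg at hcon
    have h2 : (q b).2 ≤ (q a).2 := le_of_lt (hqy a b hab hbk)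
    have heq := hanti (q b) (hqG b) (q a) (hqG a) hcon h2
    have hlt := hqy a b hab hbk
    rw [heq] at hlt
    exact lt_irrefl _ hlt
  -- extreme persistent generators: q 0 has max y, q k has min y
  have hq0max : ∀ p ∈ G, p.2 ≤ (q 0).2 := by
    obtain ⟨m0, hm0G, hm0pers, hm0min⟩ :=
      aux_exists_min G hne (1 + G.sup (fun p => p.2)) 1 (by positivity) one_pos
    set K : ℕ := 1 + G.sup (fun p => p.2) with hK
    have hm0max : ∀ p ∈ G, p.2 ≤ m0.2 := by
      intro p hp
      by_contra hcon
      push_neg at hcon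
      have hx : p.1 < m0.1 := by
        by_contra hx'
        push_neg at hx'
        have := hanti m0 hm0G p hp hx' (le_of_lt hcon)
        rw [this] at hcon
        exact lt_irrefl _ hcon
      have hmul : K * (p.1 + 1) ≤ K * m0.1 := Nat.mul_le_mul_left _ (by omega)
      have hexp : K * (p.1 + 1) = K * p.1 + K := by ring
      have hpK : p.2 < K := by
        have : p.2 ≤ G.sup (fun p => p.2) := Finset.le_sup hp
        omega
      have := hm0min p hp
      omega
    obtain ⟨j0, hj0⟩ := (hP m0).1 hm0pers
    intro p hp
    have h1 : (g j0).2 ≤ (g ⟨min 0 k, Nat.lt_succ_of_le (Nat.min_le_right 0 k)⟩).2 := by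
      apply hy.antitone
      rw [Fin.le_def]
      simp
    calc p.2 ≤ m0.2 := hm0max p hp
    _ = (g j0).2 := by rw [hj0]
    _ ≤ _ := by rw [hqdef]; exact h1
  have hqkmin : ∀ p ∈ G, (q k).2 ≤ p.2 := by
    obtain ⟨m1, hm1G, hm1pers, hm1min⟩ :=
      aux_exists_min G hne 1 (1 + G.sup (fun p => p.1)) one_pos (by positivity)
    set K : ℕ := 1 + G.sup (fun p => p.1) with hK
    have hm1ymin : ∀ p ∈ G, m1.2 ≤ p.2 := by
      intro p hp
      by_contra hcon
      push_neg at hcon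
      have hmul : K * (p.2 + 1) ≤ K * m1.2 := Nat.mul_le_mul_left _ (by omega)
      have hexp : K * (p.2 + 1) = K * p.2 + K := by ring
      have hpK : p.1 < K := by
        have : p.1 ≤ G.sup (fun p => p.1) := Finset.le_sup hp
        omega
      have := hm1min p hp
      omega
    obtain ⟨j1, hj1⟩ := (hP m1).1 hm1pers
    intro p hp
    have h1 : (g ⟨min k k, Nat.lt_succ_of_le (Nat.min_le_right k k)⟩).2 ≤ (g j1).2 := by
      apply hy.antitone
      rw [Fin.le_def]
      simp
      omega
    calc (q k).2 ≤ (g j1).2 := by rw [hqdef]; exact h1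
    _ = m1.2 := by rw [hj1]
    _ ≤ p.2 := hm1ymin p hp
  -- h not in chain and same y as chain element → equal (impossible); helper:
  have hsamey : ∀ h ∈ G, ∀ j : ℕ, h.2 = (q j).2 → h = q j := by
    intro h hh j hj2
    rcases Nat.le_total h.1 (q j).1 with h1 | h1
    · exact hanti h hh (q j) (hqG j) h1 (le_of_eq hj2)
    · exact (hanti (q j) (hqG j) h hh h1 (le_of_eq hj2.symm)).symm
  -- location of a non-persistent generator
  have hloc : ∀ h ∈ G, (¬ ∃ i : Fin (k+1), g i = h) →
      ∃ i, i < k ∧ (q i).1 < h.1 ∧ h.1 < (q (i+1)).1 ∧ (q (i+1)).2 < h.2 ∧ h.2 < (q i).2 := by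
    intro h hh hcon
    have hneq : ∀ j : ℕ, h ≠ q j := by
      intro j heq
      exact hcon ⟨_, ((hqdef j) ▸ heq).symm⟩
    have htop : h.2 < (q 0).2 := by
      rcases Nat.lt_or_ge h.2 (q 0).2 with h' | h'
      · exact h'
      · have : h.2 = (q 0).2 := le_antisymm (hq0max h hh) h'
        exact absurd (hsamey h hh 0 this) (hneq 0)
    have hbot : (q k).2 < h.2 := by
      rcases Nat.lt_or_ge (q k).2 h.2 with h' | h'
      · exact h'
      · have : h.2 = (q k).2 := le_antisymm h' (hqkmin h hh)
        exact absurd (hsamey h hh k this) (hneq k)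
    -- find the last index i with h.2 < (q i).2
    have hex : ∃ i, i < k ∧ h.2 < (q i).2 ∧ (q (i+1)).2 < h.2 := by
      have hstep : ∀ d i : ℕ, i ≤ k → k - i = d → h.2 < (q i).2 →
          ∃ i', i' < k ∧ h.2 < (q i').2 ∧ (q (i'+1)).2 < h.2 := by
        intro d
        induction d with
        | zero =>
          intro i hik hdi hlt
          have : i = k := by omega
          rw [this] at hlt
          omega
        | succ d ih =>
          intro i hik hdi hlt
          have hik' : i < k := by omega
          rcases lt_trichotomy (q (i+1)).2 h.2 with h' | h' | h'
          · exact ⟨i, hik', hlt, h'⟩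
          · exact absurd (hsamey h hh (i+1) h'.symm) (hneq (i+1))
          · exact ih (i+1) (by omega) (by omega) h'
      exact hstep (k - 0) 0 (Nat.zero_le k) rfl htop
    obtain ⟨i, hik, hup, hdn⟩ := hex
    refine ⟨i, hik, ?_, ?_, hdn, hup⟩
    · by_contra hx
      push_neg at hx
      exact absurd (hanti h hh (q i) (hqG i) hx (le_of_lt hup)) (hneq i)
    · by_contra hx
      push_neg at hx
      exact absurd (hanti (q (i+1)) (hqG (i+1)) h hh hx (le_of_lt hdn)).symm (hneq (i+1))
  -- convexity of the persistent chain
  have hconv : ∀ j, j + 1 < k →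
      ((q (j+1)).2 - (q (j+2)).2) * ((q (j+1)).1 - (q j).1) <
      ((q j).2 - (q (j+1)).2) * ((q (j+2)).1 - (q (j+1)).1) := by
    intro j hjk
    by_contra hcon
    push_neg at hcon
    have hx1 : (q j).1 < (q (j+1)).1 := hqx j (j+1) (by omega) (by omega)
    have hx2 : (q (j+1)).1 < (q (j+2)).1 := hqx (j+1) (j+2) (by omega) (by omega)
    have hy1' : (q (j+1)).2 < (q j).2 := hqy j (j+1) (by omega) (by omega)
    have hy2' : (q (j+2)).2 < (q (j+1)).2 := hqy (j+1) (j+2) (by omega) (by omega)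
    have hab : ((q j).2 - (q (j+2)).2) * (q j).1 + ((q (j+2)).1 - (q j).1) * (q j).2 ≤
        ((q j).2 - (q (j+2)).2) * (q (j+1)).1 + ((q (j+2)).1 - (q j).1) * (q (j+1)).2 := by
      obtain ⟨u1, hu1⟩ : ∃ u1, (q (j+1)).1 = (q j).1 + u1 := ⟨(q (j+1)).1 - (q j).1, by omega⟩
      obtain ⟨u2, hu2⟩ : ∃ u2, (q (j+2)).1 = (q (j+1)).1 + u2 := ⟨(q (j+2)).1 - (q (j+1)).1, by omega⟩
      obtain ⟨v1, hv1⟩ : ∃ v1, (q j).2 = (q (j+1)).2 + v1 := ⟨(q j).2 - (q (j+1)).2, by omega⟩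
      obtain ⟨v2, hv2⟩ : ∃ v2, (q (j+1)).2 = (q (j+2)).2 + v2 := ⟨(q (j+1)).2 - (q (j+2)).2, by omega⟩
      have hcon' : v1 * u2 ≤ v2 * u1 := by
        have e3 : (q (j+1)).2 - (q (j+2)).2 = v2 := by omega
        have e4 : (q (j+1)).1 - (q j).1 = u1 := by omega
        have e5 : (q j).2 - (q (j+1)).2 = v1 := by omega
        have e6 : (q (j+2)).1 - (q (j+1)).1 = u2 := by omega
        rw [e3, e4, e5, e6] at hcon
        exact hcon
      have e1 : (q j).2 - (q (j+2)).2 = v1 + v2 := by omega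
      have e2 : (q (j+2)).1 - (q j).1 = u1 + u2 := by omega
      rw [e1, e2, hu1, hv1]
      nlinarith [hcon']
    obtain ⟨a, ha0, haN, hle⟩ := aux_lemB (q j) (q (j+2)) (q (j+1)) hx1 hx2 hy2' hy1' hab
    have hIC : inIC (q j) (q (j+2)) (q (j+1)) := by
      refine ⟨min ((q (j+2)).1 - (q j).1) ((q j).2 - (q (j+2)).2), by omega, a, by omega, hle⟩
    refine (hqpers (j+1)).2 (q j) (q (j+2))
      ⟨q j, hqG j, le_refl _⟩ ⟨q (j+2), hqG (j+2), le_refl _⟩ ?_ ?_ hIC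
    · intro heq
      rw [heq] at hy1'
      exact lt_irrefl _ hy1'
    · intro heq
      rw [heq] at hy2'
      exact lt_irrefl _ hy2'
  -- every generator lies on or above the segment of its neighbours
  have habove : ∀ h ∈ G, ∀ i : ℕ, i < k →
      ((q i).2 - (q (i+1)).2) * (q i).1 + ((q (i+1)).1 - (q i).1) * (q i).2 ≤
      ((q i).2 - (q (i+1)).2) * h.1 + ((q (i+1)).1 - (q i).1) * h.2 := by
    intro h hh i hik
    by_contra hcon
    push_neg at hcon
    have hdyp : 0 < (q i).2 - (q (i+1)).2 := by
      have := hqy i (i+1) (by omega) (by omega); omega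
    have hdxp : 0 < (q (i+1)).1 - (q i).1 := by
      have := hqx i (i+1) (by omega) (by omega); omega
    obtain ⟨m2, hm2G, hm2pers, hm2min⟩ :=
      aux_exists_min G hne ((q i).2 - (q (i+1)).2) ((q (i+1)).1 - (q i).1) hdyp hdxp
    obtain ⟨j2, hj2⟩ := (hP m2).1 hm2pers
    have hq2 : q j2.1 = m2 := by
      rw [hqg j2.1 (by omega) j2.isLt, Fin.eta, hj2]
    have hchain := aux_chain_min (fun j => (q j).1) (fun j => (q j).2) k
        (fun j hj => hqx j (j+1) (by omega) (by omega))
        (fun j hj => hqy j (j+1) (by omega) (by omega))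
        (fun j hj => hconv j hj) i hik j2.1 (by omega)
    rw [hq2] at hchain
    have h1 := hm2min h hh
    omega
  -- the extraction step
  have extract : ∀ s : Multiset (ℕ×ℕ), (∀ x ∈ s, x ∈ G) → δ + 1 ≤ Multiset.card s →
      ∃ p t, (∃ i : Fin (k+1), g i = p) ∧ (∀ x ∈ t, x ∈ G) ∧
        Multiset.card t + 1 = Multiset.card s ∧ p + Multiset.sum t ≤ Multiset.sum s := by
    intro s hsG hscard
    by_cases hcase : ∃ p ∈ s, ∃ i : Fin (k+1), g i = p
    · obtain ⟨p, hps, hip⟩ := hcase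
      refine ⟨p, s.erase p, hip, ?_, ?_, ?_⟩
      · exact fun x hx => hsG x (Multiset.mem_of_mem_erase hx)
      · have h1 := Multiset.card_erase_of_mem hps
        have h1' : (Multiset.card s).pred = Multiset.card s - 1 := Nat.pred_eq_sub_one
        have h2 : 1 ≤ Multiset.card s := by omega
        omega
      · have hco := Multiset.cons_erase hps
        exact le_of_eq (by conv_rhs => rw [← hco, Multiset.sum_cons])
    · push_neg at hcase
      set NP := G \ Finset.image g Finset.univ with hNP
      have hsNP : ∀ x ∈ s, x ∈ NP := by
        intro x hx
        rw [hNP, Finset.mem_sdiff]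
        refine ⟨hsG x hx, ?_⟩
        rw [Finset.mem_image]
        rintro ⟨i, _, hgi⟩
        exact hcase x hx i hgi
      have himcard : (Finset.image g Finset.univ).card = k + 1 := by
        rw [Finset.card_image_of_injective _ hginj, Finset.card_univ, Fintype.card_fin]
      have hsub : Finset.image g Finset.univ ⊆ G :=
        Finset.image_subset_iff.2 (fun i _ => hgG i)
      have hNPcard : NP.card = G.card - (k+1) := by
        rw [hNP, Finset.card_sdiff_of_subset hsub, himcard]
      have hδ' : δ = NP.card * δp := by rw [hNPcard]; exact hδ
      have hpig : ∃ h ∈ NP, δp + 1 ≤ s.count h := by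
        by_contra hcon2
        push_neg at hcon2
        have h1 : Multiset.card s = ∑ a ∈ s.toFinset, s.count a :=
          (Multiset.toFinset_sum_count_eq s).symm
        have hsub2 : s.toFinset ⊆ NP := fun a ha => hsNP a (Multiset.mem_toFinset.1 ha)
        have h2 : Multiset.card s ≤ ∑ a ∈ NP, s.count a := by
          rw [h1]
          exact Finset.sum_le_sum_of_subset hsub2
        have h3 : ∑ a ∈ NP, s.count a ≤ ∑ a ∈ NP, δp :=
          Finset.sum_le_sum (fun a ha => by have := hcon2 a ha; omega)
        have h4 : ∑ a ∈ NP, δp = NP.card * δp := by rw [Finset.sum_const, smul_eq_mul]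
        omega
      obtain ⟨h0, h0NP, h0cnt⟩ := hpig
      have h0G : h0 ∈ G := (Finset.mem_sdiff.1 h0NP).1
      have h0np : ¬ ∃ i : Fin (k+1), g i = h0 := by
        rintro ⟨i, hi⟩
        exact (Finset.mem_sdiff.1 h0NP).2 (Finset.mem_image.2 ⟨i, Finset.mem_univ i, hi⟩)
      obtain ⟨i, hik, hx1, hx2, hy2', hy1'⟩ := hloc h0 h0G h0np
      have hab := habove h0 h0G i hik
      obtain ⟨a, ha0, haN, hle⟩ := aux_lemB (q i) (q (i+1)) h0 hx1 hx2 hy2' hy1' hab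
      set N := min ((q (i+1)).1 - (q i).1) ((q i).2 - (q (i+1)).2) with hNdef
      have hsup : N ≤ (Finset.univ.sup fun i : Fin k =>
          min (dX (g i.castSucc) (g i.succ)) (dY (g i.castSucc) (g i.succ))) := by
        have hle2 := Finset.le_sup (f := fun i : Fin k =>
          min (dX (g i.castSucc) (g i.succ)) (dY (g i.castSucc) (g i.succ)))
          (Finset.mem_univ (⟨i, hik⟩ : Fin k))
        have ecs : g (⟨i, hik⟩ : Fin k).castSucc = q i := by
          rw [hqg i (by omega) (by omega)]
          congr 1
        have esc : g (⟨i, hik⟩ : Fin k).succ = q (i+1) := by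
          rw [hqg (i+1) (by omega) (by omega)]
          congr 1
        have hxx := hqx i (i+1) (by omega) (by omega)
        have hyy := hqy i (i+1) (by omega) (by omega)
        have edX : dX (q i) (q (i+1)) = (q (i+1)).1 - (q i).1 := by
          unfold dX; omega
        have edY : dY (q i) (q (i+1)) = (q i).2 - (q (i+1)).2 := by
          unfold dY; omega
        simp only [ecs, esc, edX, edY] at hle2
        exact hle2
      have hNδp : N ≤ δp + 1 := by omega
      have hcnt : N ≤ s.count h0 := by omega
      obtain ⟨r, hr⟩ : ∃ r, s = Multiset.replicate N h0 + r := by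
        have hle3 : Multiset.replicate N h0 ≤ s := by
          rw [Multiset.le_iff_count]
          intro b
          rw [Multiset.count_replicate]
          split
          · next hb => subst hb; exact hcnt
          · exact Nat.zero_le _
        exact Multiset.le_iff_exists_add.1 hle3
      obtain ⟨a', rfl⟩ : ∃ a', a = a' + 1 := ⟨a - 1, by omega⟩
      refine ⟨q i, Multiset.replicate a' (q i) +
        (Multiset.replicate (N - (a'+1)) (q (i+1)) + r), ?_, ?_, ?_, ?_⟩
      · exact ⟨⟨i, by omega⟩, (hqg i (by omega) (by omega)).symm⟩
      · intro x hx
        simp only [Multiset.mem_add] at hx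
        rcases hx with hx | hx | hx
        · rw [Multiset.eq_of_mem_replicate hx]; exact hqG i
        · rw [Multiset.eq_of_mem_replicate hx]; exact hqG (i+1)
        · exact hsG x (by rw [hr]; exact Multiset.mem_add.2 (Or.inr hx))
      · have hcs : Multiset.card s = N + Multiset.card r := by rw [hr]; simp
        simp only [Multiset.card_add, Multiset.card_replicate]
        omega
      · have he : q i + (Multiset.replicate a' (q i) +
            (Multiset.replicate (N - (a'+1)) (q (i+1)) + r)).sum =
            ((a'+1) • q i + (N - (a'+1)) • q (i+1)) + r.sum := by
          simp only [Multiset.sum_add, Multiset.sum_replicate, succ_nsmul]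
          abel
        have hs : Multiset.sum s = N • h0 + r.sum := by
          rw [hr]
          simp [Multiset.sum_add, Multiset.sum_replicate]
        rw [he, hs]
        exact add_le_add_left hle r.sum
  -- forward direction, by induction on n
  have forward : ∀ n (s : Multiset (ℕ×ℕ)), (∀ x ∈ s, x ∈ G) → Multiset.card s = δ + n →
      ∃ t : Multiset (ℕ×ℕ), (∀ x ∈ t, ∃ i, x = g i) ∧ Multiset.card t = n ∧
        ∃ m', memNpow G δ m' ∧ t.sum + m' ≤ s.sum := by
    intro n
    induction n with
    | zero =>
      intro s hsG hcard
      exact ⟨0, by simp, by simp, s.sum, ⟨s, hsG, by omega, le_refl _⟩, by simp⟩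
    | succ n ih =>
      intro s hsG hcard
      obtain ⟨p, t', hip, ht'G, ht'card, hple⟩ := extract s hsG (by omega)
      obtain ⟨t, htpers, htcard, m', hm', hsum⟩ := ih t' ht'G (by omega)
      refine ⟨p ::ₘ t, ?_, by simp [htcard], m', hm', ?_⟩
      · intro x hx
        rcases Multiset.mem_cons.1 hx with hx | hx
        · obtain ⟨i0, hi0⟩ := hip
          exact ⟨i0, by rw [hx, hi0]⟩
        · exact htpers x hx
      · calc (p ::ₘ t).sum + m' = p + (t.sum + m') := by rw [Multiset.sum_cons]; ring
        _ ≤ p + t'.sum := add_le_add_right hsum p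
        _ ≤ s.sum := hple
  intro n m
  constructor
  · rintro ⟨s, hsG, hscard, hssum⟩
    obtain ⟨t, htpers, htcard, m', hm', hsum⟩ := forward n s hsG hscard
    exact ⟨t, htpers, htcard, m', hm', le_trans hsum hssum⟩
  · rintro ⟨s, hspers, hscard, m', ⟨u, huG, hucard, husum⟩, hle⟩
    refine ⟨s + u, ?_, by simp [hscard, hucard]; omega, ?_⟩
    · intro x hx
      rcases Multiset.mem_add.1 hx with hx | hx
      · obtain ⟨i, hi⟩ := hspers x hx
        rw [hi]; exact hgG i
      · exact huG x hx
    · calc (s + u).sum = s.sum + u.sum := Multiset.sum_add s u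
      _ ≤ s.sum + m' := add_le_add_right husum _
      _ ≤ m := hle
end

section
/- Let I = (y^2, x^2 y, x^3) ⊆ k[x,y]. Then for all ℓ ≥ 0, the minimal generating set of I^{3+ℓ} is the disjoint union of y^{2+2ℓ}·{y^4, x^2 y^3, x^3 y^2, x^5 y, x^6}, the sets x^{3+3j} y^{2+2(ℓ−j)}·{x^2 y, x^3} for 1 ≤ j ≤ ℓ, and x^{6+3ℓ}·{x^2 y, x^3}. In particular μ(I^{3+ℓ}) = 7 + 2ℓ for all ℓ ≥ 0. -/
lemma sum_eq (s : Multiset (ℕ × ℕ)) (h : ∀ x ∈ s, x ∈ ({(0,2),(2,1),(3,0)} : Finset (ℕ×ℕ))) :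
    s.sum = (2 * s.count (2,1) + 3 * s.count (3,0), 2 * s.count (0,2) + s.count (2,1)) ∧
    s.count (0,2) + s.count (2,1) + s.count (3,0) = Multiset.card s := by
  induction s using Multiset.induction with
  | empty => simp [Prod.ext_iff]
  | cons a s ih =>
    have ha := h a (Multiset.mem_cons_self a s)
    have ih' := ih (fun x hx => h x (Multiset.mem_cons_of_mem hx))
    simp only [Finset.mem_insert, Finset.mem_singleton] at ha
    rcases ha with rfl | rfl | rfl <;>
      simp [Multiset.count_cons, Prod.ext_iff, Multiset.sum_cons, ih'.1, Prod.mk_add_mk,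
        ih'.2.symm] <;> omega

lemma mem_iff (n u v : ℕ) :
    memNpow {(0,2),(2,1),(3,0)} n (u,v) ↔
      ∃ x y, 6*n ≤ 2*x+3*y ∧ x+2*y ≤ 4*n ∧ x+y ≤ 3*n ∧ x ≤ u ∧ y ≤ v := by
  constructor
  · rintro ⟨s, hG, hcard, hle⟩
    obtain ⟨hsum, hcnt⟩ := sum_eq s hG
    rw [hsum] at hle
    obtain ⟨h1, h2⟩ := Prod.mk_le_mk.mp hle
    exact ⟨2 * s.count (2,1) + 3 * s.count (3,0), 2 * s.count (0,2) + s.count (2,1),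
      by omega, by omega, by omega, h1, h2⟩
  · rintro ⟨x, y, h1, h2, h3, hx, hy⟩
    have hxy : 2*n ≤ x + y := by omega
    refine ⟨Multiset.replicate (3*n - x - y) (0,2) + Multiset.replicate (2*x+3*y-6*n) (2,1)
      + Multiset.replicate (4*n-x-2*y) (3,0), ?_, ?_, ?_⟩
    · intro z hz
      simp only [Multiset.mem_add, Multiset.mem_replicate] at hz
      rcases hz with (⟨_, rfl⟩|⟨_, rfl⟩)|⟨_, rfl⟩ <;> simp
    · simp only [Multiset.card_add, Multiset.card_replicate]; omega
    · simp only [Multiset.sum_add, Multiset.sum_replicate, smul_eq_mul, Prod.smul_mk]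
      rw [Prod.mk_add_mk, Prod.mk_add_mk, Prod.mk_le_mk]
      constructor <;> simp <;> omega

def isMinGenN (G : Finset (ℕ × ℕ)) (n : ℕ) (m : ℕ × ℕ) : Prop :=
  memNpow G n m ∧ ∀ m', memNpow G n m' → m' ≤ m → m' = m

lemma min_iff (n X Y : ℕ) :
    isMinGenN {(0,2),(2,1),(3,0)} n (X,Y) ↔
      (6*n ≤ 2*X+3*Y ∧ X+2*Y ≤ 4*n ∧ X+Y ≤ 3*n) ∧
      (X = 0 ∨ 2*X+3*Y < 6*n + 2) ∧ (Y = 0 ∨ 2*X+3*Y < 6*n + 3) := by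
  constructor
  · rintro ⟨hm, hmin⟩
    obtain ⟨x, y, h1, h2, h3, hx, hy⟩ := (mem_iff n X Y).mp hm
    have hxy : (x, y) = (X, Y) := by
      refine hmin _ ((mem_iff n x y).mpr ⟨x, y, h1, h2, h3, le_refl _, le_refl _⟩)
        (Prod.mk_le_mk.mpr ⟨hx, hy⟩)
    rw [Prod.mk.injEq] at hxy
    obtain ⟨hx1, hy1⟩ := hxy
    refine ⟨⟨by omega, by omega, by omega⟩, ?_, ?_⟩
    · by_contra hc
      push_neg at hc
      obtain ⟨hX0, hXb⟩ := hc
      have := hmin (X-1, Y) ((mem_iff n (X-1) Y).mpr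
        ⟨X-1, Y, by omega, by omega, by omega, le_refl _, le_refl _⟩)
        (Prod.mk_le_mk.mpr ⟨by omega, le_refl _⟩)
      rw [Prod.mk.injEq] at this; omega
    · by_contra hc
      push_neg at hc
      obtain ⟨hY0, hYb⟩ := hc
      have := hmin (X, Y-1) ((mem_iff n X (Y-1)).mpr
        ⟨X, Y-1, by omega, by omega, by omega, le_refl _, le_refl _⟩)
        (Prod.mk_le_mk.mpr ⟨le_refl _, by omega⟩)
      rw [Prod.mk.injEq] at this; omega
  · rintro ⟨⟨h1, h2, h3⟩, hnx, hny⟩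
    refine ⟨(mem_iff n X Y).mpr ⟨X, Y, h1, h2, h3, le_refl _, le_refl _⟩, ?_⟩
    rintro ⟨u, v⟩ hm' hle
    obtain ⟨x, y, g1, g2, g3, gx, gy⟩ := (mem_iff n u v).mp hm'
    obtain ⟨hu, hv⟩ := Prod.mk_le_mk.mp hle
    rw [Prod.mk.injEq]
    omega

lemma key (ℓ X Y : ℕ) (h : isMinGenN {(0,2),(2,1),(3,0)} (3+ℓ) (X,Y)) :
    (X = 0 ∧ Y = 6+2*ℓ) ∨ (∃ t, t ≤ 2+ℓ ∧ X = 2+3*t ∧ Y = 5+2*ℓ-2*t) ∨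
    (∃ t, t ≤ 2+ℓ ∧ X = 3+3*t ∧ Y = 4+2*ℓ-2*t) := by
  rw [min_iff] at h
  have hd : X % 3 = 0 ∨ X % 3 = 1 ∨ X % 3 = 2 := by omega
  have hx : X = 3 * (X / 3) + X % 3 := by omega
  rcases hd with hd|hd|hd
  · rcases Nat.eq_zero_or_pos X with h0|h0
    · exact Or.inl ⟨h0, by omega⟩
    · exact Or.inr (Or.inr ⟨X/3 - 1, by omega, by omega, by omega⟩)
  · exact absurd h (by omega)
  · exact Or.inr (Or.inl ⟨X/3, by omega, by omega, by omega⟩)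

lemma main_eq (ℓ : ℕ) :
    ({m : ℕ × ℕ | isMinGenN {(0,2), (2,1), (3,0)} (3 + ℓ) m} =
      (fun f => f + ((0 : ℕ), 2 + 2 * ℓ)) ''
          ({(0,4), (2,3), (3,2), (5,1), (6,0)} : Set (ℕ × ℕ)) ∪
        (⋃ j ∈ Set.Icc 1 ℓ,
          (fun f => f + (3 + 3 * j, 2 + 2 * (ℓ - j))) ''
            ({(2,1), (3,0)} : Set (ℕ × ℕ))) ∪
        (fun f => f + (6 + 3 * ℓ, (0 : ℕ))) '' ({(2,1), (3,0)} : Set (ℕ × ℕ))) := by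
  ext ⟨X, Y⟩
  simp only [Set.mem_setOf_eq, Set.mem_union, Set.mem_image, Set.mem_iUnion,
    Set.mem_insert_iff, Set.mem_singleton_iff, Set.mem_Icc, Prod.mk_add_mk, Prod.mk.injEq,
    exists_eq_or_imp, exists_eq_left]
  constructor
  · intro h
    rcases key ℓ X Y h with h'|⟨t, ht, hX, hY⟩|⟨t, ht, hX, hY⟩
    · exact Or.inl (Or.inl (Or.inl (by omega)))
    · have hc : t = 0 ∨ t = 1 ∨ (2 ≤ t ∧ t ≤ 1+ℓ) ∨ t = 2+ℓ := by omega
      rcases hc with hc|hc|hc|hc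
      · exact Or.inl (Or.inl (Or.inr (Or.inl (by omega))))
      · exact Or.inl (Or.inl (Or.inr (Or.inr (Or.inr (Or.inl (by omega))))))
      · exact Or.inl (Or.inr ⟨t-1, ⟨by omega, by omega⟩, Or.inl ⟨by omega, by omega⟩⟩)
      · exact Or.inr (Or.inl (by omega))
    · have hc : t = 0 ∨ t = 1 ∨ (2 ≤ t ∧ t ≤ 1+ℓ) ∨ t = 2+ℓ := by omega
      rcases hc with hc|hc|hc|hc
      · exact Or.inl (Or.inl (Or.inr (Or.inr (Or.inl (by omega)))))
      · exact Or.inl (Or.inl (Or.inr (Or.inr (Or.inr (Or.inr (by omega))))))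
      · exact Or.inl (Or.inr ⟨t-1, ⟨by omega, by omega⟩, Or.inr ⟨by omega, by omega⟩⟩)
      · exact Or.inr (Or.inr (by omega))
  · rintro ((h'|⟨i, ⟨hi1, hi2⟩, h'⟩)|h')
    · rw [min_iff]; omega
    · rw [min_iff]; omega
    · rw [min_iff]; omega

noncomputable def g (ℓ : ℕ) : ℕ → ℕ × ℕ := fun k =>
  if k = 0 then (0, 6+2*ℓ) else (2 + 3*((k-1)/2) + (k-1)%2, 5+2*ℓ - 2*((k-1)/2) - (k-1)%2)

lemma finset_eq (ℓ : ℕ) :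
    {m : ℕ × ℕ | isMinGenN {(0,2), (2,1), (3,0)} (3 + ℓ) m} =
      ↑((Finset.range (7+2*ℓ)).image (g ℓ)) := by
  ext ⟨X, Y⟩
  simp only [Set.mem_setOf_eq, Finset.coe_image, Set.mem_image, Finset.mem_coe,
    Finset.mem_range, g]
  constructor
  · intro h
    rcases key ℓ X Y h with h'|⟨t, ht, hX, hY⟩|⟨t, ht, hX, hY⟩
    · exact ⟨0, by omega, by rw [if_pos rfl, Prod.mk.injEq]; omega⟩
    · refine ⟨2*t+1, by omega, ?_⟩
      rw [if_neg (by omega), Prod.mk.injEq]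
      omega
    · refine ⟨2*t+2, by omega, ?_⟩
      rw [if_neg (by omega), Prod.mk.injEq]
      omega
  · rintro ⟨k, hk, he⟩
    rw [min_iff]
    by_cases h0 : k = 0
    · rw [if_pos h0, Prod.mk.injEq] at he; omega
    · rw [if_neg h0, Prod.mk.injEq] at he; omega

lemma card_eq (ℓ : ℕ) :
    {m : ℕ × ℕ | isMinGenN {(0,2), (2,1), (3,0)} (3 + ℓ) m}.ncard = 7 + 2 * ℓ := by
  rw [finset_eq, Set.ncard_coe_finset, Finset.card_image_of_injOn, Finset.card_range]
  intro a ha b hb hab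
  simp only [g] at hab
  split_ifs at hab with h1 h2
  · rw [Prod.mk.injEq] at hab; omega
  · rw [Prod.mk.injEq] at hab; omega
  · rw [Prod.mk.injEq] at hab; omega
  · rw [Prod.mk.injEq] at hab; omega

/-- Example small: For `I = (y^2, x^2 y, x^3)` and all `ℓ ≥ 0`, the
minimal generating set of `I^{3+ℓ}` is the disjoint union of
`y^{2+2ℓ}·{y^4, x^2y^3, x^3y^2, x^5y, x^6}`, the sets
`x^{3+3j} y^{2+2(ℓ−j)}·{x^2y, x^3}` for `1 ≤ j ≤ ℓ`, and `x^{6+3ℓ}·{x^2y, x^3}`;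
in particular `μ(I^{3+ℓ}) = 7 + 2ℓ`. -/
theorem example_small (ℓ : ℕ) :
    ({m : ℕ × ℕ | isMinGenN {(0,2), (2,1), (3,0)} (3 + ℓ) m} =
      (fun f => f + ((0 : ℕ), 2 + 2 * ℓ)) ''
          ({(0,4), (2,3), (3,2), (5,1), (6,0)} : Set (ℕ × ℕ)) ∪
        (⋃ j ∈ Set.Icc 1 ℓ,
          (fun f => f + (3 + 3 * j, 2 + 2 * (ℓ - j))) ''
            ({(2,1), (3,0)} : Set (ℕ × ℕ))) ∪
        (fun f => f + (6 + 3 * ℓ, (0 : ℕ))) '' ({(2,1), (3,0)} : Set (ℕ × ℕ))) ∧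
    {m : ℕ × ℕ | isMinGenN {(0,2), (2,1), (3,0)} (3 + ℓ) m}.ncard = 7 + 2 * ℓ := by
  exact ⟨main_eq ℓ, card_eq ℓ⟩
end
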